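/- arXiv:2112.13961 — 6 statements merged into one kernel-verified Lean document; each statement's English description precedes it below -/
import Mathlib

section
/- Let r > 0 and let ν be a real-valued function, continuous on the punctured closed disk {z ∈ ℂ : 0 < |z| ≤ r}, which satisfies the sub-mean value inequality at every point of the punctured open disk: for every z with 0 < |z| < r there is δ > 0 such that ν(z) ≤ (1/2π)∫₀^{2π} ν(z + s e^{iθ}) dθ for all 0 < s < δ. Assume further that for every ε > 0, ν(z) + ε·log|z| → −∞ as z → 0. Then for every z with 0 < |z| < r one has ν(z) ≤ sup_{|ζ| = r} ν(ζ). -/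
/-!
For `ε > 0` the perturbation `v = ν + ε (log ‖z‖ + ‖z‖²)` still tends to `-∞` at `0`, and it
satisfies the *strict* sub-mean value inequality on the punctured disk: `log ‖z‖` has the mean
value property away from `0`, while the circle averages of `‖z‖²` around `w` are `‖w‖² + s²`.
Hence on an annulus `ρ ≤ ‖z‖ ≤ r` the maximum of `v` is attained on the boundary, and for `ρ`
small not on the inner circle. This gives `ν z + ε (log ‖z‖ + ‖z‖²) ≤ sup ν + ε (log r + r²)`
on the sphere of radius `r`; let `ε → 0`.
-/

open Filter Metric Real Set Topology

theorem le_of_forall_pos_add_mul_le {a b c d : ℝ} (h : ∀ ε > 0, a + ε * c ≤ b + ε * d) :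
    a ≤ b := by
  have hlim (x y : ℝ) : Tendsto (fun ε ↦ x + ε * y) (𝓝[>] 0) (𝓝 x) := by
    have : Continuous fun ε : ℝ ↦ x + ε * y := by fun_prop
    simpa using (this.tendsto 0).mono_left nhdsWithin_le_nhds
  exact le_of_tendsto_of_tendsto (hlim a c) (hlim b d) (eventually_nhdsWithin_of_forall h)

theorem ContinuousOn.eventually_sphere_subset_and_circleIntegrable {E : Type*}
    [NormedAddCommGroup E] {f : ℂ → E} {U : Set ℂ} {w : ℂ} (hf : ContinuousOn f U)
    (hU : U ∈ 𝓝 w) : ∀ᶠ s in 𝓝[>] 0, sphere w s ⊆ U ∧ CircleIntegrable f w s := by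
  filter_upwards [nhdsWithin_le_nhds (eventually_closedBall_subset hU), self_mem_nhdsWithin]
    with s hsU hs
  have hsphere : sphere w s ⊆ U := sphere_subset_closedBall.trans hsU
  exact ⟨hsphere, (hf.mono hsphere).circleIntegrable (le_of_lt hs)⟩

theorem eventually_le_circleAverage_of_le_integral {ν : ℂ → ℝ} {w : ℂ}
    (h : ∃ δ > (0 : ℝ), ∀ s : ℝ, 0 < s → s < δ → ν w ≤ (1 / (2 * π)) *
      ∫ θ in (0 : ℝ)..(2 * π), ν (w + (s : ℂ) * Complex.exp ((θ : ℂ) * Complex.I))) :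
    ∀ᶠ s in 𝓝[>] 0, ν w ≤ circleAverage ν w s := by
  obtain ⟨δ, hδ, h⟩ := h
  filter_upwards [Ioo_mem_nhdsGT hδ] with s hs
  simpa [circleAverage_def, circleMap, one_div] using h s hs.1 hs.2

theorem circleAverage_log_norm_of_lt_norm {w : ℂ} {s : ℝ} (hs : 0 < s) (hsw : s < ‖w‖) :
    circleAverage (fun z ↦ log ‖z‖) w s = log ‖w‖ := by
  have h := circleAverage_log_norm_sub_const_eq_log_radius_add_posLog (c := w) (a := 0) hs.ne'
  simp only [sub_zero] at h
  have hw : 0 < ‖w‖ := hs.trans hsw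
  have hone : 1 ≤ |s⁻¹ * ‖w‖| := by
    rw [abs_of_pos (by positivity)]
    exact (one_le_inv_mul₀ hs).mpr hsw.le
  rw [h, posLog_eq_log hone, ← log_mul hs.ne' (by positivity), mul_inv_cancel_left₀ hs.ne']

theorem circleAverage_norm_sq (w : ℂ) (s : ℝ) :
    circleAverage (fun z ↦ ‖z‖ ^ 2) w s = ‖w‖ ^ 2 + s ^ 2 := by
  -- On the circle, `‖z‖² = ‖w‖² + s² + re (2 w̄ (z - w))`, and the last term has mean `0`.
  set g : ℂ → ℂ := fun z ↦ 2 * starRingEnd ℂ w * (z - w)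
  have hg : Differentiable ℂ g := by fun_prop
  have hg_avg : circleAverage (Complex.reCLM ∘ g) w s = 0 := by
    rw [Complex.reCLM.circleAverage_comp_comm hg.continuous.continuousOn.circleIntegrable',
      hg.diffContOnCl.circleAverage]
    simp [g]
  have hsphere : ∀ z ∈ sphere w |s|, ‖z‖ ^ 2 = ‖w‖ ^ 2 + s ^ 2 + (Complex.reCLM ∘ g) z := by
    intro z hz
    have h := congrArg (· ^ 2) (mem_sphere_iff_norm.mp hz)
    simp only [Complex.sq_norm, sq_abs, Complex.normSq_apply, Complex.sub_re,
      Complex.sub_im] at h ⊢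
    simp only [Function.comp_apply, Complex.reCLM_apply, g, Complex.mul_re, Complex.mul_im,
      Complex.conj_re, Complex.conj_im, Complex.sub_re, Complex.sub_im, Complex.re_ofNat,
      Complex.im_ofNat]
    linear_combination h
  rw [circleAverage_congr_sphere hsphere, circleAverage_fun_add (circleIntegrable_const _ _ _)
    (Complex.reCLM.continuous.comp hg.continuous).continuousOn.circleIntegrable',
    circleAverage_const, hg_avg, add_zero]

theorem eventually_lt_circleAverage_add_mul_log_norm_add_sq {ν : ℂ → ℝ} {w : ℂ} {ε : ℝ}
    (hw : w ≠ 0) (hε : 0 < ε)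
    (hint : ∀ᶠ s in 𝓝[>] 0, CircleIntegrable ν w s)
    (hmean : ∀ᶠ s in 𝓝[>] 0, ν w ≤ circleAverage ν w s) :
    ∀ᶠ s in 𝓝[>] 0, ν w + ε * (log ‖w‖ + ‖w‖ ^ 2) <
      circleAverage (fun z ↦ ν z + ε * (log ‖z‖ + ‖z‖ ^ 2)) w s := by
  filter_upwards [hint, hmean, Ioo_mem_nhdsGT (norm_pos_iff.mpr hw)] with s hint hmean ⟨hs, hsw⟩
  have hlog : CircleIntegrable (fun z ↦ log ‖z‖) w s :=
    MeromorphicOn.circleIntegrable_log_norm fun _ _ ↦ by fun_prop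
  have hsq : CircleIntegrable (fun z ↦ ‖z‖ ^ 2) w s :=
    (continuous_norm.pow 2).continuousOn.circleIntegrable'
  have hu : CircleIntegrable (fun z ↦ ε * (log ‖z‖ + ‖z‖ ^ 2)) w s := (hlog.add hsq).const_smul
  have hsmul : circleAverage (fun z ↦ ε * (log ‖z‖ + ‖z‖ ^ 2)) w s =
      ε * circleAverage (fun z ↦ log ‖z‖ + ‖z‖ ^ 2) w s :=
    circleAverage_fun_smul (a := ε) (f := fun z ↦ log ‖z‖ + ‖z‖ ^ 2)
  rw [circleAverage_fun_add hint hu, hsmul, circleAverage_fun_add hlog hsq,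
    circleAverage_log_norm_of_lt_norm hs hsw, circleAverage_norm_sq]
  nlinarith [mul_pos hε (pow_pos hs 2)]

theorem IsCompact.exists_isMaxOn_notMem_of_lt_circleAverage {K U : Set ℂ} (hK : IsCompact K)
    (hne : K.Nonempty) (hU : IsOpen U) (hUK : U ⊆ K) {f : ℂ → ℝ} (hf : ContinuousOn f K)
    (hsub : ∀ w ∈ U, ∃ᶠ s in 𝓝[>] 0, f w < circleAverage f w s) :
    ∃ w ∈ K, w ∉ U ∧ IsMaxOn f K w := by
  obtain ⟨w, hwK, hmax⟩ := hK.exists_isMaxOn hne hf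
  refine ⟨w, hwK, fun hwU ↦ ?_, hmax⟩
  obtain ⟨s, hlt, ⟨hsU, hint⟩, hs⟩ :=
    ((hsub w hwU).and_eventually
      (((hf.mono hUK).eventually_sphere_subset_and_circleIntegrable (hU.mem_nhds hwU)).and
        self_mem_nhdsWithin)).exists
  have hle : circleAverage f w s ≤ f w := by
    refine circleAverage_mono_on_of_le_circle hint fun z hz ↦ hmax (hUK (hsU ?_))
    rwa [abs_of_pos hs] at hz
  exact hlt.not_ge hle

theorem exists_mem_sphere_le_of_lt_circleAverage {v : ℂ → ℝ} {r : ℝ}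
    (hv : ContinuousOn v {z : ℂ | 0 < ‖z‖ ∧ ‖z‖ ≤ r})
    (hsub : ∀ w : ℂ, 0 < ‖w‖ → ‖w‖ < r → ∃ᶠ s in 𝓝[>] 0, v w < circleAverage v w s)
    (hbot : Tendsto v (𝓝[≠] 0) atBot) {z : ℂ} (hz : 0 < ‖z‖) (hzr : ‖z‖ ≤ r) :
    ∃ w ∈ sphere (0 : ℂ) r, v z ≤ v w := by
  obtain ⟨δ, hδ, hsmall⟩ := Metric.eventually_nhds_iff.mp
    (eventually_nhdsWithin_iff.mp (hbot.eventually (eventually_lt_atBot (v z))))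
  set ρ := min (δ / 2) ‖z‖
  have hρ : 0 < ρ := lt_min (half_pos hδ) hz
  have hρδ : ρ < δ := (min_le_left _ _).trans_lt (half_lt_self hδ)
  set K : Set ℂ := (fun y : ℂ ↦ ‖y‖) ⁻¹' Icc ρ r
  have hK : IsCompact K := (isCompact_closedBall (0 : ℂ) r).of_isClosed_subset
    (isClosed_Icc.preimage continuous_norm) fun y hy ↦ mem_closedBall_zero_iff.mpr hy.2
  have hzK : z ∈ K := ⟨min_le_right _ _, hzr⟩
  obtain ⟨w, hwK, hwU, hmax⟩ := hK.exists_isMaxOn_notMem_of_lt_circleAverage ⟨z, hzK⟩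
    (isOpen_Ioo.preimage continuous_norm) (preimage_mono Ioo_subset_Icc_self)
    (hv.mono fun y hy ↦ ⟨hρ.trans_le hy.1, hy.2⟩) fun y hy ↦ hsub y (hρ.trans hy.1) hy.2
  have hvz : v z ≤ v w := hmax hzK
  -- On the inner circle `v < v z`, so the maximum sits on the outer one.
  obtain hwρ | hwρ := eq_or_lt_of_le (show ρ ≤ ‖w‖ from hwK.1)
  · have : v w < v z := hsmall (by rwa [dist_zero_right, ← hwρ])
      (by simpa [← norm_pos_iff, ← hwρ] using hρ)
    exact absurd hvz this.not_ge
  · exact ⟨w, mem_sphere_zero_iff_norm.mpr (hwK.2.eq_of_not_lt fun h ↦ hwU ⟨hwρ, h⟩), hvz⟩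

theorem punctured_disk_maximum_principle_general (r : ℝ) (ν : ℂ → ℝ)
    (hcont : ContinuousOn ν {z : ℂ | 0 < ‖z‖ ∧ ‖z‖ ≤ r})
    (hsub : ∀ z : ℂ, 0 < ‖z‖ → ‖z‖ < r →
      ∃ δ > (0 : ℝ), ∀ s : ℝ, 0 < s → s < δ →
        ν z ≤ (1 / (2 * Real.pi)) *
          ∫ θ in (0 : ℝ)..(2 * Real.pi), ν (z + (s : ℂ) * Complex.exp ((θ : ℂ) * Complex.I)))
    (hblow : ∀ ε > (0 : ℝ),
      Filter.Tendsto (fun z : ℂ => ν z + ε * Real.log (‖z‖))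
        (nhdsWithin (0 : ℂ) {(0 : ℂ)}ᶜ) Filter.atBot) :
    ∀ z : ℂ, 0 < ‖z‖ → ‖z‖ < r →
      ν z ≤ sSup (ν '' Metric.sphere (0 : ℂ) r) := by
  intro z hz hzr
  have hsphere : sphere (0 : ℂ) r ⊆ {z : ℂ | 0 < ‖z‖ ∧ ‖z‖ ≤ r} := fun w hw ↦ by
    rw [mem_sphere_zero_iff_norm] at hw
    exact ⟨hw ▸ hz.trans hzr, hw.le⟩
  have hbdd : BddAbove (ν '' sphere 0 r) :=
    ((isCompact_sphere 0 r).image_of_continuousOn (hcont.mono hsphere)).bddAbove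
  refine le_of_forall_pos_add_mul_le (c := log ‖z‖ + ‖z‖ ^ 2) (d := log r + r ^ 2) fun ε hε ↦ ?_
  set v : ℂ → ℝ := fun z ↦ ν z + ε * (log ‖z‖ + ‖z‖ ^ 2)
  have hv : ContinuousOn v {z : ℂ | 0 < ‖z‖ ∧ ‖z‖ ≤ r} :=
    hcont.add (continuousOn_const.mul ((continuous_norm.continuousOn.log fun z hz ↦ hz.1.ne').add
      (continuous_norm.pow 2).continuousOn))
  have hstrict (w : ℂ) (hw : 0 < ‖w‖) (hwr : ‖w‖ < r) :
      ∃ᶠ s in 𝓝[>] 0, v w < circleAverage v w s := by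
    have hint := (hcont.mono fun y hy ↦ ⟨hy.1, hy.2.le⟩)
      |>.eventually_sphere_subset_and_circleIntegrable
        ((isOpen_Ioo.preimage continuous_norm).mem_nhds ⟨hw, hwr⟩)
    refine Eventually.frequently ?_
    exact eventually_lt_circleAverage_add_mul_log_norm_add_sq (norm_pos_iff.mp hw) hε
      (hint.mono fun _ h ↦ h.2) (eventually_le_circleAverage_of_le_integral (hsub w hw hwr))
  have hbot : Tendsto v (𝓝[≠] 0) atBot := by
    have hsq : Tendsto (fun z : ℂ ↦ ε * ‖z‖ ^ 2) (𝓝[≠] 0) (𝓝 0) := by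
      simpa using
        (((continuous_norm.pow 2).const_mul ε).tendsto (0 : ℂ)).mono_left nhdsWithin_le_nhds
    simpa only [v, mul_add, add_assoc] using (hblow ε hε).atBot_add hsq
  obtain ⟨w, hw, hle⟩ := exists_mem_sphere_le_of_lt_circleAverage hv hstrict hbot hz hzr.le
  simp only [v, mem_sphere_zero_iff_norm.mp hw] at hle
  linarith [le_csSup hbdd (mem_image_of_mem ν hw)]

/-- **Maximum principle on the punctured disk for functions of sub-logarithmic blow-up.**
If `ν` is continuous on the punctured closed disk of radius `r`, satisfies the sub-mean
value inequality on the punctured open disk, and `ν z + ε log |z| → -∞` as `z → 0`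
for every `ε > 0`, then `ν` is bounded on the punctured open disk by its supremum on the
boundary circle. -/
theorem punctured_disk_maximum_principle (r : ℝ) (hr : 0 < r) (ν : ℂ → ℝ)
    (hcont : ContinuousOn ν {z : ℂ | 0 < ‖z‖ ∧ ‖z‖ ≤ r})
    (hsub : ∀ z : ℂ, 0 < ‖z‖ → ‖z‖ < r →
      ∃ δ > (0 : ℝ), ∀ s : ℝ, 0 < s → s < δ →
        ν z ≤ (1 / (2 * Real.pi)) *
          ∫ θ in (0 : ℝ)..(2 * Real.pi), ν (z + (s : ℂ) * Complex.exp ((θ : ℂ) * Complex.I)))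
    (hblow : ∀ ε > (0 : ℝ),
      Filter.Tendsto (fun z : ℂ => ν z + ε * Real.log (‖z‖))
        (nhdsWithin (0 : ℂ) {(0 : ℂ)}ᶜ) Filter.atBot) :
    ∀ z : ℂ, 0 < ‖z‖ → ‖z‖ < r →
      ν z ≤ sSup (ν '' Metric.sphere (0 : ℂ) r) :=
  punctured_disk_maximum_principle_general r ν hcont hsub hblow
end

section
/- Let G be an invertible n×n real matrix, let b₁,…,bₙ ∈ ℂ be the roots of its characteristic polynomial counted with multiplicity, and let μ₁,…,μₙ > 0 be the eigenvalues of the positive definite symmetric matrix Gᵀ G counted with multiplicity. Then ∑_{i=1}^n (log |bᵢ|²)² ≤ ∑_{i=1}^n (log μᵢ)². -/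
/-!
Weyl's inequality: if `b₁, …, bₙ` are the eigenvalues of `A`, ordered by decreasing modulus, and
`ν₁ ≥ ⋯ ≥ νₙ` those of `Aᴴ * A`, then `∏_{i<k} |bᵢ|² ≤ ∏_{i<k} νᵢ` for every `k`, with equality
for `k = n` since both sides are `|det A|²`. To see it, triangularize `A = U T Uᴴ` with diagonal
`b₁, …, bₙ` (Schur). The leading `k × k` block `T_k` of `T` satisfies
`T_kᴴ T_k = Zᴴ diag(ν) Z` for some `Z` with orthonormal columns, and the Cauchy–Binet formula
exhibits `det (Zᴴ diag(ν) Z)` as a convex combination of products of `k` distinct `νᵢ`, each at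
most `ν₁ ⋯ ν_k`. After taking logarithms, `(log |bᵢ|²)ᵢ` is majorized by `(log νᵢ)ᵢ`, and Abel
summation turns majorization of a decreasing sequence into the inequality between sums of
squares.
-/

open Matrix Polynomial Finset

theorem mul_sum_range_le_sum_range_mul {x d : ℕ → ℝ} {m : ℕ}
    (hx : ∀ i < m, x (i + 1) ≤ x i) (hd : ∀ k ≤ m, 0 ≤ ∑ i ∈ range (k + 1), d i) :
    x m * ∑ i ∈ range (m + 1), d i ≤ ∑ i ∈ range (m + 1), x i * d i := by
  induction m with
  | zero => simp
  | succ m ih =>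
    have hxm := hx m m.lt_succ_self
    have hdm := hd m m.le_succ
    have ih := ih (fun i hi => hx i (by omega)) (fun k hk => hd k (by omega))
    rw [sum_range_succ (fun i => d i), sum_range_succ (fun i => x i * d i)]
    nlinarith

theorem sum_range_sq_le_of_sum_range_le {n : ℕ} {x y : ℕ → ℝ}
    (hx : ∀ i, i + 1 < n → x (i + 1) ≤ x i)
    (hle : ∀ k ≤ n, ∑ i ∈ range k, x i ≤ ∑ i ∈ range k, y i)
    (heq : ∑ i ∈ range n, x i = ∑ i ∈ range n, y i) :
    ∑ i ∈ range n, x i ^ 2 ≤ ∑ i ∈ range n, y i ^ 2 := by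
  obtain _ | m := n
  · simp
  have hcross : 0 ≤ ∑ i ∈ range (m + 1), x i * (y i - x i) := by
    have := mul_sum_range_le_sum_range_mul (x := x) (d := fun i => y i - x i) (m := m)
      (fun i hi => hx i (by omega)) (fun k hk => by
        rw [sum_sub_distrib, sub_nonneg]; exact hle (k + 1) (by omega))
    rwa [sum_sub_distrib, heq, sub_self, mul_zero] at this
  have hsq : ∑ i ∈ range (m + 1), (y i ^ 2 - x i ^ 2)
      = ∑ i ∈ range (m + 1), ((y i - x i) ^ 2 + 2 * (x i * (y i - x i))) :=
    sum_congr rfl fun i _ => by ring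
  rw [sum_add_distrib, ← mul_sum, sum_sub_distrib] at hsq
  have := sum_nonneg fun i (_ : i ∈ range (m + 1)) => sq_nonneg (y i - x i)
  linarith

theorem sum_sq_log_le_of_prod_castLE_le {n : ℕ} {p q : Fin n → ℝ} (hp : ∀ i, 0 < p i)
    (hq : ∀ i, 0 < q i) (hp_anti : Antitone p)
    (hle : ∀ k (hk : k ≤ n), ∏ a : Fin k, p (Fin.castLE hk a) ≤ ∏ a : Fin k, q (Fin.castLE hk a))
    (heq : ∏ i, p i = ∏ i, q i) :
    ∑ i, Real.log (p i) ^ 2 ≤ ∑ i, Real.log (q i) ^ 2 := by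
  let logSeq (f : Fin n → ℝ) (j : ℕ) : ℝ := if h : j < n then Real.log (f ⟨j, h⟩) else 0
  have sum_logSeq (f : Fin n → ℝ) (hf : ∀ i, 0 < f i) (k : ℕ) (hk : k ≤ n) :
      ∑ j ∈ range k, logSeq f j = Real.log (∏ a : Fin k, f (Fin.castLE hk a)) := by
    rw [Real.log_prod fun a _ => (hf _).ne', ← Fin.sum_univ_eq_sum_range]
    exact sum_congr rfl fun a _ => dif_pos (a.2.trans_le hk)
  have sum_logSeq_sq (f : Fin n → ℝ) :
      ∑ j ∈ range n, logSeq f j ^ 2 = ∑ i, Real.log (f i) ^ 2 := by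
    rw [← Fin.sum_univ_eq_sum_range (fun j => logSeq f j ^ 2)]
    exact sum_congr rfl fun i _ => by simp [logSeq]
  rw [← sum_logSeq_sq, ← sum_logSeq_sq]
  refine sum_range_sq_le_of_sum_range_le (fun i hi => ?_) (fun k hk => ?_) ?_
  · simp only [logSeq, dif_pos hi, dif_pos (Nat.lt_of_succ_lt hi)]
    exact Real.log_le_log (hp _) (hp_anti (Fin.mk_le_mk.2 i.le_succ))
  · rw [sum_logSeq p hp k hk, sum_logSeq q hq k hk]
    exact Real.log_le_log (prod_pos fun a _ => hp _) (hle k hk)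
  · rw [sum_logSeq p hp n le_rfl, sum_logSeq q hq n le_rfl]
    simpa using congrArg Real.log heq

theorem Tuple.exists_perm_antitone_comp {n : ℕ} {β : Type*} [LinearOrder β] (f : Fin n → β) :
    ∃ σ : Equiv.Perm (Fin n), Antitone (f ∘ σ) :=
  ⟨Fin.revPerm.trans (Tuple.sort f), (Tuple.monotone_sort f).comp_antitone Fin.rev_anti⟩

theorem Multiset.exists_univ_val_map_eq_antitone {α β : Type*} [LinearOrder β] {n : ℕ}
    (s : Multiset α) (hs : Multiset.card s = n) (g : α → β) :
    ∃ d : Fin n → α, univ.val.map d = s ∧ Antitone (g ∘ d) := by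
  obtain ⟨l, rfl⟩ := Quot.exists_rep s
  obtain rfl : l.length = n := hs
  obtain ⟨σ, hσ⟩ := Tuple.exists_perm_antitone_comp (g ∘ l.get)
  refine ⟨l.get ∘ σ, ?_, hσ⟩
  rw [← Multiset.map_map, map_univ_val_equiv, Fin.univ_val_map, List.ofFn_get]
  rfl

theorem Fin.univ_val_map_eq_cons {α : Type*} {n : ℕ} (d : Fin (n + 1) → α) :
    (univ.val.map d : Multiset α) = d 0 ::ₘ univ.val.map (Fin.tail d) := by
  simp [Fin.univ_val_map, List.ofFn_succ]
  rfl

theorem Fin.exists_orderEmbedding_comp_perm_eq {k n : ℕ} {p : Fin k → Fin n}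
    (hp : Function.Injective p) :
    ∃ (f : Fin k ↪o Fin n) (σ : Equiv.Perm (Fin k)), ⇑f ∘ ⇑σ = p := by
  refine ⟨.ofStrictMono _ ((Tuple.monotone_sort p).strictMono_of_injective
    (hp.comp (Tuple.sort p).injective)), (Tuple.sort p).symm, ?_⟩
  ext i
  simp

theorem Fin.injective_orderEmbedding_comp_perm {k n : ℕ} :
    Function.Injective fun x : (Fin k ↪o Fin n) × Equiv.Perm (Fin k) => ⇑x.1 ∘ ⇑x.2 := by
  rintro ⟨f, σ⟩ ⟨g, τ⟩ (h : ⇑f ∘ ⇑σ = ⇑g ∘ ⇑τ)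
  have hf : (⇑f ∘ ⇑σ) ∘ ⇑σ.symm = f := by ext; simp
  have hg : (⇑f ∘ ⇑σ) ∘ ⇑τ.symm = g := by ext; simp [h]
  have hfg := Tuple.unique_monotone (hf ▸ f.monotone) (hg ▸ g.monotone)
  obtain rfl : f = g := DFunLike.coe_injective (hf.symm.trans (hfg.trans hg))
  exact Prod.ext rfl (Equiv.ext fun i => f.injective (congrFun h i))

theorem Fin.val_le_orderEmbedding_apply {k n : ℕ} (f : Fin k ↪o Fin n) (a : Fin k) :
    (a : ℕ) ≤ f a := by
  have h : (Iic a).map f.toEmbedding ⊆ Iic (f a) := by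
    intro x hx
    obtain ⟨b, hb, rfl⟩ := mem_map.mp hx
    exact mem_Iic.mpr (f.monotone (mem_Iic.mp hb))
  simpa using card_le_card h

theorem prod_le_prod_castLE_of_antitone {k n : ℕ} {ν : Fin n → ℝ} (hν : Antitone ν)
    (hν0 : ∀ i, 0 ≤ ν i) (hk : k ≤ n) (f : Fin k ↪o Fin n) :
    ∏ a, ν (f a) ≤ ∏ a, ν (Fin.castLE hk a) :=
  prod_le_prod (fun _ _ => hν0 _) fun a _ =>
    hν (Fin.le_def.mpr (Fin.val_le_orderEmbedding_apply f a))

namespace Matrix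

section CauchyBinet

variable {R : Type*} [CommRing R] {k n : ℕ}

theorem det_mul_eq_sum_det_submatrix_mul_prod (A : Matrix (Fin k) (Fin n) R)
    (B : Matrix (Fin n) (Fin k) R) :
    (A * B).det = ∑ p : Fin k → Fin n, (A.submatrix id p).det * ∏ i, B (p i) i := by
  simp only [det_apply', mul_apply, prod_univ_sum, Fintype.piFinset_univ, submatrix_apply, id,
    mul_sum, sum_mul, prod_mul_distrib]
  rw [sum_comm]
  exact sum_congr rfl fun p _ => sum_congr rfl fun σ _ => by ring

/-- The **Cauchy–Binet formula**. -/
theorem det_mul_eq_sum_orderEmbedding (A : Matrix (Fin k) (Fin n) R)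
    (B : Matrix (Fin n) (Fin k) R) :
    (A * B).det = ∑ f : Fin k ↪o Fin n, (A.submatrix id f).det * (B.submatrix f id).det := by
  set F : (Fin k → Fin n) → R := fun p => (A.submatrix id p).det * ∏ i, B (p i) i
  have hF (f : Fin k ↪o Fin n) (σ : Equiv.Perm (Fin k)) :
      F (f ∘ σ) = Equiv.Perm.sign σ * ((A.submatrix id f).det * ∏ i, B (f (σ i)) i) := by
    dsimp only [F]
    rw [show A.submatrix id (f ∘ σ) = (A.submatrix id f).submatrix id σ from rfl, det_permute']
    simp only [Function.comp_apply]
    ring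
  calc (A * B).det = ∑ p ∈ univ.image (fun x : (Fin k ↪o Fin n) × Equiv.Perm (Fin k) =>
        ⇑x.1 ∘ ⇑x.2), F p := by
        rw [det_mul_eq_sum_det_submatrix_mul_prod]
        refine (sum_subset (subset_univ _) fun p _ hp => ?_).symm
        have hp : ¬ Function.Injective p := fun hinj => hp <| by
          obtain ⟨f, σ, rfl⟩ := Fin.exists_orderEmbedding_comp_perm_eq hinj
          exact mem_image_of_mem _ (mem_univ (f, σ))
        obtain ⟨i, j, hij, hne⟩ := Function.not_injective_iff.mp hp
        have hdet : (A.submatrix id p).det = 0 := det_zero_of_column_eq hne fun r => by simp [hij]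
        simp only [hdet, zero_mul]
    _ = ∑ f : Fin k ↪o Fin n, (A.submatrix id f).det * (B.submatrix f id).det := by
        rw [sum_image fun x _ y _ h => Fin.injective_orderEmbedding_comp_perm h,
          Fintype.sum_prod_type]
        refine sum_congr rfl fun f _ => ?_
        simp only [hF, det_apply' (B.submatrix f id), mul_sum, submatrix_apply, id]
        exact sum_congr rfl fun σ _ => by ring

theorem det_conjTranspose_mul_diagonal_mul [StarRing R] (Z : Matrix (Fin n) (Fin k) R)
    (c : Fin n → R) :
    (Zᴴ * diagonal c * Z).det = ∑ f : Fin k ↪o Fin n,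
      (∏ i, c (f i)) * (star (Z.submatrix f id).det * (Z.submatrix f id).det) := by
  rw [det_mul_eq_sum_orderEmbedding]
  refine sum_congr rfl fun f _ => ?_
  have h : (Zᴴ * diagonal c).submatrix id f = (Z.submatrix f id)ᴴ * diagonal (c ∘ f) := by
    ext; simp [mul_diagonal]
  rw [h, det_mul, det_conjTranspose, det_diagonal]
  simp only [Function.comp_apply]
  ring

end CauchyBinet

theorem norm_det_conjTranspose_mul_diagonal_mul_le {k n : ℕ} {Z : Matrix (Fin n) (Fin k) ℂ}
    (hZ : Zᴴ * Z = 1) {ν : Fin n → ℝ} (hν : Antitone ν) (hν0 : ∀ i, 0 ≤ ν i) (hk : k ≤ n) :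
    ‖(Zᴴ * diagonal (fun i => (ν i : ℂ)) * Z).det‖ ≤ ∏ a : Fin k, ν (Fin.castLE hk a) := by
  have hminors : ∑ f : Fin k ↪o Fin n, ‖(Z.submatrix f id).det‖ ^ 2 = 1 := by
    have h := det_conjTranspose_mul_diagonal_mul Z fun _ => 1
    rw [diagonal_one, Matrix.mul_one, hZ, det_one] at h
    simp only [prod_const_one, one_mul, RCLike.star_def, Complex.conj_mul'] at h
    exact_mod_cast h.symm
  rw [det_conjTranspose_mul_diagonal_mul]
  calc _ ≤ ∑ f : Fin k ↪o Fin n, (∏ a, ν (f a)) * ‖(Z.submatrix f id).det‖ ^ 2 := by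
        refine (norm_sum_le _ _).trans_eq (sum_congr rfl fun f _ => ?_)
        rw [RCLike.star_def, Complex.conj_mul', norm_mul, norm_prod]
        simp [abs_of_nonneg (hν0 _)]
    _ ≤ ∑ f : Fin k ↪o Fin n, (∏ a, ν (Fin.castLE hk a)) * ‖(Z.submatrix f id).det‖ ^ 2 :=
        sum_le_sum fun f _ => mul_le_mul_of_nonneg_right
          (prod_le_prod_castLE_of_antitone hν hν0 hk f) (sq_nonneg _)
    _ = ∏ a, ν (Fin.castLE hk a) := by rw [← mul_sum, hminors, mul_one]

theorem exists_mem_unitaryGroup_mulVec_single_eq {𝕜 ι : Type*} [RCLike 𝕜] [Fintype ι]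
    [DecidableEq ι] (i₀ : ι) {u : EuclideanSpace 𝕜 ι} (hu : ‖u‖ = 1) :
    ∃ V ∈ unitaryGroup ι 𝕜, V *ᵥ Pi.single i₀ 1 = u := by
  have hon : Orthonormal 𝕜 (({i₀} : Set ι).domRestrict fun _ => u) := by
    rw [orthonormal_iff_ite]
    rintro ⟨i, rfl⟩ ⟨j, rfl⟩
    simp [inner_self_eq_norm_sq_to_K, hu, Set.domRestrict]
  obtain ⟨B, hB⟩ := hon.exists_orthonormalBasis_extension_of_card_eq (by simp)
  refine ⟨_, (EuclideanSpace.basisFun ι 𝕜).toMatrix_orthonormalBasis_mem_unitary B, ?_⟩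
  ext i
  simp [Module.Basis.toMatrix_apply, hB i₀ rfl]

theorem exists_mem_unitaryGroup_conj_apply_zero {n : ℕ}
    (A : Matrix (Fin (n + 1)) (Fin (n + 1)) ℂ) {b : ℂ} (hb : A.charpoly.IsRoot b) :
    ∃ V ∈ unitaryGroup (Fin (n + 1)) ℂ,
      ∀ i, (star V * A * V) i 0 = (Pi.single 0 b : Fin (n + 1) → ℂ) i := by
  obtain ⟨v, hv0, hv⟩ := exists_mulVec_eq_zero_iff.mpr ((eval_charpoly A b).symm.trans hb)
  have hAv : A *ᵥ v = b • v := by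
    rw [sub_mulVec, sub_eq_zero, scalar_apply] at hv
    rw [← hv]
    ext i
    simp [mulVec_diagonal]
  set w : EuclideanSpace ℂ (Fin (n + 1)) := WithLp.toLp 2 v
  have hw : w ≠ 0 := by simpa [w] using hv0
  obtain ⟨V, hV, hVu⟩ := exists_mem_unitaryGroup_mulVec_single_eq 0
    (u := (‖w‖⁻¹ : ℂ) • w) (by simp [norm_smul, hw])
  refine ⟨V, hV, fun i => ?_⟩
  have hAu : A *ᵥ (V *ᵥ Pi.single 0 1) = b • (V *ᵥ Pi.single 0 1) := by
    simp [hVu, w, mulVec_smul, hAv, smul_comm b]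
  have hcol : (star V * A * V) *ᵥ Pi.single 0 1 = b • Pi.single 0 1 := by
    rw [← mulVec_mulVec, ← mulVec_mulVec, hAu, mulVec_smul, mulVec_mulVec,
      mem_unitaryGroup_iff'.mp hV, one_mulVec]
  simpa [mulVec_single_one, Pi.single_apply] using congrFun hcol i

theorem charpoly_eq_X_sub_C_mul_charpoly_submatrix_succ {R : Type*} [CommRing R] {n : ℕ}
    (M : Matrix (Fin (n + 1)) (Fin (n + 1)) R) (hM : ∀ i : Fin n, M i.succ 0 = 0) :
    M.charpoly = (X - C (M 0 0)) * (M.submatrix Fin.succ Fin.succ).charpoly := by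
  have hsub : (charmatrix M).submatrix Fin.succ Fin.succ =
      charmatrix (M.submatrix Fin.succ Fin.succ) := by
    ext i j
    by_cases h : i = j
    · subst h; simp [charmatrix_apply_eq]
    · simp [charmatrix_apply_ne _ _ _ h, charmatrix_apply_ne _ _ _ (Fin.succ_injective _ |>.ne h)]
  rw [charpoly, det_succ_column_zero, Fin.sum_univ_succ, Fin.succAbove_zero, hsub]
  simp [hM, charmatrix_apply_eq, charpoly]

theorem exists_mem_unitaryGroup_conj_submatrix_succ_eq {R : Type*} [CommRing R] [StarRing R]
    {n : ℕ} (M : Matrix (Fin (n + 1)) (Fin (n + 1)) R) {U : Matrix (Fin n) (Fin n) R}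
    (hU : U ∈ unitaryGroup (Fin n) R) {b : R}
    (hM : ∀ i, M i 0 = (Pi.single 0 b : Fin (n + 1) → R) i) :
    ∃ W ∈ unitaryGroup (Fin (n + 1)) R,
      (∀ i, (star W * M * W) i 0 = (Pi.single 0 b : Fin (n + 1) → R) i) ∧
      (star W * M * W).submatrix Fin.succ Fin.succ =
        star U * M.submatrix Fin.succ Fin.succ * U := by
  let W : Matrix (Fin (n + 1)) (Fin (n + 1)) R :=
    Matrix.of (Fin.cons (Pi.single 0 1) fun i => Fin.cons 0 (U i))
  have hW0 : ∀ j, W 0 j = (Pi.single 0 1 : Fin (n + 1) → R) j := fun j => rfl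
  have hWs0 : ∀ i : Fin n, W i.succ 0 = 0 := fun i => rfl
  have hWss : ∀ i j : Fin n, W i.succ j.succ = U i j := fun i j => rfl
  refine ⟨W, ?_, fun i => ?_, ?_⟩
  · rw [mem_unitaryGroup_iff']
    ext i j
    have hUU (i j : Fin n) : ∑ k, star (U k i) * U k j = (1 : Matrix (Fin n) (Fin n) R) i j := by
      rw [← mem_unitaryGroup_iff'.mp hU]; simp [mul_apply]
    refine Fin.cases ?_ (fun i => ?_) i <;> refine Fin.cases ?_ (fun j => ?_) j <;>
      simp [mul_apply, Fin.sum_univ_succ, hW0, hWs0, hWss, one_apply, hUU,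
        (Fin.succ_ne_zero _).symm]
  · refine Fin.cases ?_ (fun i => ?_) i <;>
      simp [mul_apply, Fin.sum_univ_succ, hW0, hWs0, hWss, hM]
  · ext i j
    simp [mul_apply, Fin.sum_univ_succ, hW0, hWss, hM]

/-- **Schur triangularization**. -/
theorem exists_mem_unitaryGroup_isUpperTriangular {n : ℕ} (A : Matrix (Fin n) (Fin n) ℂ)
    (d : Fin n → ℂ) (hd : A.charpoly.roots = univ.val.map d) :
    ∃ U ∈ unitaryGroup (Fin n) ℂ,
      (star U * A * U).IsUpperTriangular ∧ ∀ i, (star U * A * U) i i = d i := by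
  induction n with
  | zero => exact ⟨1, one_mem _, fun i => i.elim0, fun i => i.elim0⟩
  | succ n ih =>
    have hroot : A.charpoly.IsRoot (d 0) := isRoot_of_mem_roots (by simp [hd])
    obtain ⟨V, hV, hcol⟩ := exists_mem_unitaryGroup_conj_apply_zero A hroot
    set M := star V * A * V
    have hMchar : M.charpoly = A.charpoly := by
      rw [charpoly_mul_comm, ← Matrix.mul_assoc, mem_unitaryGroup_iff.mp hV, Matrix.one_mul]
    have hM' : (M.submatrix Fin.succ Fin.succ).charpoly.roots = univ.val.map (Fin.tail d) := by
      have h := charpoly_eq_X_sub_C_mul_charpoly_submatrix_succ M fun i => by simp [hcol]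
      rw [hMchar, hcol 0, Pi.single_eq_same] at h
      have := congrArg roots h
      rw [hd, Fin.univ_val_map_eq_cons, roots_mul (h ▸ A.charpoly_monic.ne_zero),
        roots_X_sub_C, Multiset.singleton_add] at this
      exact (Multiset.cons_inj_right _).mp this.symm
    obtain ⟨U', hU', hT', hdiag'⟩ := ih _ _ hM'
    obtain ⟨W, hW, hWcol, hWsub⟩ := exists_mem_unitaryGroup_conj_submatrix_succ_eq M hU' hcol
    have hconj : star (V * W) * A * (V * W) = star W * M * W := by
      simp only [M, star_mul, Matrix.mul_assoc]
    have hsucc (i j : Fin n) :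
        (star W * M * W) i.succ j.succ = (star U' * M.submatrix Fin.succ Fin.succ * U') i j := by
      rw [← hWsub]; rfl
    refine ⟨V * W, mul_mem hV hW, ?_, fun i => ?_⟩ <;> rw [hconj]
    · intro i j hji
      induction i using Fin.cases with
      | zero => exact absurd hji (Fin.not_lt_zero _)
      | succ i =>
        induction j using Fin.cases with
        | zero => simp [hWcol]
        | succ j => rw [hsucc]; exact hT' (Fin.succ_lt_succ_iff.mp hji)
    · induction i using Fin.cases with
      | zero => simp [hWcol]
      | succ i => rw [hsucc, hdiag']; rfl

theorem IsUpperTriangular.conjTranspose_mul_self_submatrix_castLE {R : Type*} [Semiring R]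
    [StarRing R] {k n : ℕ} {T : Matrix (Fin n) (Fin n) R} (hT : T.IsUpperTriangular)
    (hk : k ≤ n) :
    (Tᴴ * T).submatrix (Fin.castLE hk) (Fin.castLE hk) =
      (T.submatrix (Fin.castLE hk) (Fin.castLE hk))ᴴ *
        T.submatrix (Fin.castLE hk) (Fin.castLE hk) := by
  ext a b
  simp only [submatrix_apply, mul_apply, conjTranspose_apply]
  rw [← sum_subset (subset_univ (univ.map (Fin.castLEEmb hk))), sum_map]
  · rfl
  intro j _ hj
  have hkj : k ≤ j := by
    by_contra! hjk
    exact hj (mem_map.mpr ⟨⟨j, hjk⟩, mem_univ _, rfl⟩)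
  have hzero : T j (Fin.castLE hk a) = 0 := hT (Fin.lt_def.mpr (by simp; omega))
  rw [hzero, star_zero, zero_mul]

section Weyl

variable {n : ℕ} {A Q : Matrix (Fin n) (Fin n) ℂ} {d : Fin n → ℂ} {ν : Fin n → ℝ}

theorem prod_norm_sq_eq_prod_of_conjTranspose_mul_self_eq
    (hd : A.charpoly.roots = univ.val.map d) (hQ : Q ∈ unitaryGroup (Fin n) ℂ)
    (hA : Aᴴ * A = Q * diagonal (fun i => (ν i : ℂ)) * star Q) :
    ∏ i, ‖d i‖ ^ 2 = ∏ i, ν i := by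
  have hdet : A.det = ∏ i, d i := by
    rw [det_eq_prod_roots_charpoly, hd, prod_map_val]
  have h : ((∏ i, ‖d i‖ ^ 2 : ℝ) : ℂ) = (Aᴴ * A).det := by
    rw [det_mul, det_conjTranspose, hdet, RCLike.star_def, map_prod, ← prod_mul_distrib]
    push_cast
    exact prod_congr rfl fun i _ => (Complex.conj_mul' _).symm
  rw [hA, det_mul, det_mul, mul_right_comm, ← det_mul, mem_unitaryGroup_iff.mp hQ, det_one,
    one_mul, det_diagonal] at h
  exact_mod_cast h

/-- **Weyl's inequality**. -/
theorem prod_castLE_norm_sq_le_of_conjTranspose_mul_self_eq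
    (hd : A.charpoly.roots = univ.val.map d) (hQ : Q ∈ unitaryGroup (Fin n) ℂ)
    (hA : Aᴴ * A = Q * diagonal (fun i => (ν i : ℂ)) * star Q) (hν : Antitone ν)
    (hν0 : ∀ i, 0 ≤ ν i) {k : ℕ} (hk : k ≤ n) :
    ∏ a : Fin k, ‖d (Fin.castLE hk a)‖ ^ 2 ≤ ∏ a : Fin k, ν (Fin.castLE hk a) := by
  obtain ⟨U, hU, hT, hdiag⟩ := exists_mem_unitaryGroup_isUpperTriangular A d hd
  set T := star U * A * U
  set c := Fin.castLE hk
  set D := diagonal fun i => (ν i : ℂ)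
  set W := star Q * U
  set Z := W.submatrix id c
  have hTT : Tᴴ * T = Wᴴ * D * W := by
    rw [← star_eq_conjTranspose] at hA ⊢
    simp only [T, W, star_mul, star_star, Matrix.mul_assoc]
    rw [← Matrix.mul_assoc U, mem_unitaryGroup_iff.mp hU, Matrix.one_mul,
      ← Matrix.mul_assoc (star A), hA]
    simp only [← star_eq_conjTranspose, star_mul, star_star, Matrix.mul_assoc]
  have hZ : Zᴴ * Z = 1 := by
    rw [conjTranspose_submatrix, ← submatrix_mul _ _ _ _ _ Function.bijective_id,
      ← star_eq_conjTranspose, mem_unitaryGroup_iff'.mp (mul_mem (Unitary.star_mem hQ) hU),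
      submatrix_one _ (Fin.castLE_injective hk)]
  have hTc : (T.submatrix c c).IsUpperTriangular := fun i j hij => hT hij
  calc ∏ a, ‖d (c a)‖ ^ 2 = ‖((T.submatrix c c)ᴴ * T.submatrix c c).det‖ := by
        rw [det_mul, det_conjTranspose, norm_mul, norm_star, ← sq, det_of_isUpperTriangular hTc,
          norm_prod, prod_pow]
        simp [hdiag, c]
    _ = ‖(Zᴴ * D * Z).det‖ := by
        rw [← hT.conjTranspose_mul_self_submatrix_castLE, hTT, conjTranspose_submatrix,
          submatrix_mul _ _ _ _ _ Function.bijective_id,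
          submatrix_mul _ _ _ _ _ Function.bijective_id, submatrix_id_id]
    _ ≤ ∏ a, ν (c a) := norm_det_conjTranspose_mul_diagonal_mul_le hZ hν hν0 hk

end Weyl

theorem submatrix_id_mem_unitaryGroup {n α : Type*} [Fintype n] [DecidableEq n] [CommRing α]
    [StarRing α] {Q : Matrix n n α} (hQ : Q ∈ unitaryGroup n α) (π : Equiv.Perm n) :
    Q.submatrix id π ∈ unitaryGroup n α := by
  rw [mem_unitaryGroup_iff', star_eq_conjTranspose, conjTranspose_submatrix,
    ← submatrix_mul _ _ _ _ _ Function.bijective_id, ← star_eq_conjTranspose,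
    mem_unitaryGroup_iff'.mp hQ, submatrix_one_equiv]

theorem submatrix_id_mul_diagonal_mul_star {n α : Type*} [Fintype n] [DecidableEq n] [CommRing α]
    [StarRing α] (Q : Matrix n n α) (c : n → α) (π : Equiv.Perm n) :
    Q.submatrix id π * diagonal (c ∘ π) * star (Q.submatrix id π) = Q * diagonal c * star Q := by
  have h : Q.submatrix id π * diagonal (c ∘ π) = (Q * diagonal c).submatrix id π := by
    ext; simp [mul_diagonal]
  rw [h, star_eq_conjTranspose, conjTranspose_submatrix, submatrix_mul_equiv, submatrix_id_id,
    star_eq_conjTranspose]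

theorem IsHermitian.exists_mem_unitaryGroup_map_ofReal_eq {n : ℕ} {S : Matrix (Fin n) (Fin n) ℝ}
    (hS : S.IsHermitian) (π : Equiv.Perm (Fin n)) :
    ∃ Q ∈ unitaryGroup (Fin n) ℂ,
      S.map Complex.ofReal = Q * diagonal (fun i => (hS.eigenvalues (π i) : ℂ)) * star Q := by
  set U : Matrix (Fin n) (Fin n) ℝ := (hS.eigenvectorUnitary : Matrix (Fin n) (Fin n) ℝ)
  have hmap_star (M : Matrix (Fin n) (Fin n) ℝ) :
      (star M).map Complex.ofReal = star (M.map Complex.ofReal) :=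
    conjTranspose_map _ fun x => (Complex.conj_ofReal x).symm
  have hmap_mul (M N : Matrix (Fin n) (Fin n) ℝ) :
      (M * N).map Complex.ofReal = M.map Complex.ofReal * N.map Complex.ofReal :=
    Matrix.map_mul (f := Complex.ofRealHom)
  have hU : U.map Complex.ofReal ∈ unitaryGroup (Fin n) ℂ := by
    rw [mem_unitaryGroup_iff', ← hmap_star, ← hmap_mul,
      mem_unitaryGroup_iff'.mp hS.eigenvectorUnitary.2]
    simp
  refine ⟨_, submatrix_id_mem_unitaryGroup hU π, ?_⟩
  rw [show (fun i => (hS.eigenvalues (π i) : ℂ)) = (fun i => (hS.eigenvalues i : ℂ)) ∘ π from rfl,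
    submatrix_id_mul_diagonal_mul_star]
  conv_lhs => rw [hS.spectral_theorem, Unitary.conjStarAlgAut_apply]
  rw [hmap_mul, hmap_mul, hmap_star, diagonal_map (by simp)]
  rfl

end Matrix

/-- For an invertible real `n × n` matrix `G` with complex eigenvalues `b₁, …, bₙ`
(the roots of its characteristic polynomial, counted with multiplicity) and with
`μ₁, …, μₙ` the eigenvalues of the positive definite symmetric matrix `Gᵀ * G`
(counted with multiplicity), one has `∑ᵢ (log |bᵢ|²)² ≤ ∑ᵢ (log μᵢ)²`. -/
theorem sum_sq_log_eigenvalues_le {n : ℕ} (G : Matrix (Fin n) (Fin n) ℝ)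
    (hG : IsUnit G.det) (hH : (Gᵀ * G).IsHermitian) :
    (((G.map (Complex.ofReal : ℝ → ℂ)).charpoly.roots.map
        fun b => Real.log (‖b‖ ^ 2) ^ 2).sum)
      ≤ ∑ i : Fin n, Real.log (hH.eigenvalues i) ^ 2 := by
  set A := G.map Complex.ofReal
  have hμ : ∀ i, 0 < hH.eigenvalues i := by
    have hpd : (Gᴴ * G).PosDef := .conjTranspose_mul_self G
      (mulVec_injective_iff_isUnit.mpr ((isUnit_iff_isUnit_det G).mpr hG))
    exact (conjTranspose_eq_transpose_of_trivial G ▸ hpd).eigenvalues_pos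
  obtain ⟨π, hπ⟩ := Tuple.exists_perm_antitone_comp hH.eigenvalues
  obtain ⟨Q, hQ, hspec⟩ := hH.exists_mem_unitaryGroup_map_ofReal_eq π
  have hA : Aᴴ * A = Q * diagonal (fun i => (hH.eigenvalues (π i) : ℂ)) * star Q := by
    rw [← hspec]
    ext i j
    simp [A, mul_apply]
  obtain ⟨d, hd, hd_anti⟩ := A.charpoly.roots.exists_univ_val_map_eq_antitone
    (by rw [splits_iff_card_roots.mp (IsAlgClosed.splits _), charpoly_natDegree_eq_dim,
      Fintype.card_fin]) (‖·‖ ^ 2)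
  have hd0 : ∀ i, 0 < ‖d i‖ ^ 2 := by
    have hdet : ∏ i, d i ≠ 0 := by
      rw [← prod_map_val, hd, ← det_eq_prod_roots_charpoly]
      change (Complex.ofRealHom.mapMatrix G).det ≠ 0
      rw [← RingHom.map_det, Complex.ofRealHom_eq_coe]
      exact_mod_cast hG.ne_zero
    intro i
    have := prod_ne_zero_iff.mp hdet i (mem_univ i)
    positivity
  rw [← hd, Multiset.map_map, ← Equiv.sum_comp π]
  exact sum_sq_log_le_of_prod_castLE_le hd0 (fun i => hμ _) hd_anti
    (fun k hk => prod_castLE_norm_sq_le_of_conjTranspose_mul_self_eq hd.symm hQ hA hπ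
      (fun i => (hμ _).le) hk)
    (prod_norm_sq_eq_prod_of_conjTranspose_mul_self_eq hd.symm hQ hA)
end

section
/- For every g ∈ SL(2,ℝ) acting on the hyperbolic upper half-plane ℍ, there exist a path c : [0,∞) → ℍ which is either constant or satisfies dist(c(s), c(t)) = |s − t| for all s, t ≥ 0 (a unit-speed geodesic ray for the hyperbolic metric), and constants a, b > 0, such that for all t ≥ 0, dist(g • c(t), c(t)) ≤ Δ_g + b e^{−a t}. That is, every isometry of ℍ coming from SL(2,ℝ) has exponential decay to its translation length. -/
/-!
Write `g = !![a, b; c, d]`. Then `g • z - z = Q z / (c * z + d)` with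
`Q z = a * z + b - z * (c * z + d)` and `Im (g • z) = Im z / |c * z + d| ^ 2`, so the
displacement is `dist (g • z) z = 2 * arsinh (‖Q z‖ / (2 * Im z))`: everything is decided by
`‖Q z‖ / Im z`.

If `c ≠ 0`, completing the square with `det g = 1` gives `Q z = -c * ((z - x₀) ^ 2 - r)`, where
`x₀ = (a - d) / (2 * c)` and `r = D / (4 * c ^ 2)` for the discriminant `D = (a + d) ^ 2 - 4`.
For `D < 0` the point `x₀ + i √(-r)` is fixed. For `D > 0` the inequality
`2 * |R * Im w| ≤ ‖w ^ 2 - R ^ 2‖` with `R = √r` shows that `‖Q z‖ / Im z` is minimal at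
`x₀ + i R`. For `D = 0` one has `‖Q z‖ / Im z = |c| * Im z` on the vertical geodesic through `x₀`,
which decays exponentially in the arclength as the geodesic runs down to `x₀`.

If `c = 0`, `Q` is affine: for `a ≠ d`, `‖Q z‖ ≥ |a - d| * Im z` with equality at a point, and
for `a = d` it is the constant `b`, so `‖Q z‖ / Im z` decays exponentially up a vertical geodesic.
-/

open UpperHalfPlane
open scoped MatrixGroups

noncomputable section

section TranslationLength

variable {X : Type*} [PseudoMetricSpace X]

def translationLength (f : X → X) : ℝ := ⨅ x, dist (f x) x

def HasExpDecayToTranslationLength (f : X → X) : Prop :=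
  ∃ c : ℝ → X,
    ((∀ s t : ℝ, 0 ≤ s → 0 ≤ t → c s = c t) ∨
      (∀ s t : ℝ, 0 ≤ s → 0 ≤ t → dist (c s) (c t) = |s - t|)) ∧
    ∃ a > (0 : ℝ), ∃ b > (0 : ℝ), ∀ t : ℝ, 0 ≤ t →
      dist (f (c t)) (c t) ≤ translationLength f + b * Real.exp (-a * t)

lemma translationLength_nonneg (f : X → X) : 0 ≤ translationLength f :=
  Real.iInf_nonneg fun _ => dist_nonneg

namespace HasExpDecayToTranslationLength

variable {f : X → X}

lemma of_forall_dist_le (x₀ : X) (h : ∀ x, dist (f x₀) x₀ ≤ dist (f x) x) :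
    HasExpDecayToTranslationLength f := by
  refine ⟨fun _ => x₀, Or.inl fun _ _ _ _ => rfl, 1, one_pos, 1, one_pos, fun t _ => ?_⟩
  have : Nonempty X := ⟨x₀⟩
  have : dist (f x₀) x₀ ≤ translationLength f := le_ciInf h
  have : 0 < 1 * Real.exp (-1 * t) := by positivity
  linarith

lemma of_isometry {c : ℝ → X} (hc : Isometry c) {B : ℝ} (hB : 0 ≤ B)
    (h : ∀ t, 0 ≤ t → dist (f (c t)) (c t) ≤ B * Real.exp (-t)) :
    HasExpDecayToTranslationLength f := by
  -- `B + 1`, not `B`: the constant must be positive even when `f` moves no point of `c`.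
  refine ⟨c, Or.inr fun s t _ _ => by rw [hc.dist_eq, Real.dist_eq], 1, one_pos, B + 1,
    by positivity, fun t ht => ?_⟩
  have := h t ht
  have := translationLength_nonneg f
  have := Real.exp_pos (-t)
  rw [neg_one_mul]
  nlinarith

end HasExpDecayToTranslationLength

end TranslationLength

lemma Complex.two_mul_abs_mul_im_le_norm_sq_sub_sq (R : ℝ) (w : ℂ) :
    2 * |R * w.im| ≤ ‖w ^ 2 - (R : ℂ) ^ 2‖ := by
  rw [Complex.norm_def, Real.le_sqrt (by positivity) (Complex.normSq_nonneg _), mul_pow, sq_abs,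
    Complex.normSq_apply]
  -- `‖w ^ 2 - R ^ 2‖ ^ 2 - (2 * R * w.im) ^ 2 = (‖w‖ ^ 2 - R ^ 2) ^ 2`
  simp only [sq, Complex.sub_re, Complex.sub_im, Complex.mul_re, Complex.mul_im,
    Complex.ofReal_re, Complex.ofReal_im]
  nlinarith [sq_nonneg (w.re * w.re + w.im * w.im - R * R)]

lemma Real.arsinh_le_self {x : ℝ} (hx : 0 ≤ x) : Real.arsinh x ≤ x :=
  calc Real.arsinh x ≤ Real.arsinh (Real.sinh x) :=
        Real.arsinh_le_arsinh.2 (Real.self_le_sinh_iff.2 hx)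
    _ = x := Real.arsinh_sinh x

lemma Matrix.SpecialLinearGroup.discr_fin_two {R : Type*} [CommRing R] (g : SL(2, R)) :
    (g : Matrix (Fin 2) (Fin 2) R).discr = (g 0 0 + g 1 1) ^ 2 - 4 := by
  rw [Matrix.discr_fin_two, Matrix.trace_fin_two, g.det_coe, mul_one]

lemma Matrix.SpecialLinearGroup.det_fin_two {R : Type*} [CommRing R] (g : SL(2, R)) :
    g 0 0 * g 1 1 - g 0 1 * g 1 0 = 1 := by
  rw [← Matrix.det_fin_two, g.det_coe]

namespace UpperHalfPlane

variable (g : SL(2, ℝ))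

def fixedPointQuadratic (z : ℂ) : ℂ :=
  (g 0 0 : ℂ) * z + g 0 1 - z * ((g 1 0 : ℂ) * z + g 1 1)

lemma coe_smul_sub_self (z : ℍ) :
    ((g • z : ℍ) : ℂ) - z = fixedPointQuadratic g z / ((g 1 0 : ℂ) * z + g 1 1) := by
  have hD : (g 1 0 : ℂ) * z + g 1 1 ≠ 0 := denom_ne_zero g z
  rw [coe_specialLinearGroup_apply, fixedPointQuadratic, eq_div_iff hD, sub_mul]
  simp only [Algebra.algebraMap_self, RingHom.id_apply, div_mul_cancel₀ _ hD]

lemma im_sl2R_smul_eq_div_normSq (z : ℍ) :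
    (g • z).im = z.im / Complex.normSq ((g 1 0 : ℂ) * z + g 1 1) := by
  simp only [MulAction.compHom_smul_def, im_smul_eq_div_normSq,
    Matrix.SpecialLinearGroup.det_mapGL, Units.val_one, abs_one, one_mul]
  rfl

lemma dist_smul_self (z : ℍ) :
    dist (g • z) z = 2 * Real.arsinh (‖fixedPointQuadratic g z‖ / (2 * z.im)) := by
  have hD : ‖(g 1 0 : ℂ) * z + g 1 1‖ ≠ 0 := norm_ne_zero_iff.2 (denom_ne_zero g z)
  have hsqrt : √((g • z).im * z.im) = z.im / ‖(g 1 0 : ℂ) * z + g 1 1‖ := by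
    rw [im_sl2R_smul_eq_div_normSq, Complex.normSq_eq_norm_sq, div_mul_eq_mul_div, ← sq, ← div_pow,
      Real.sqrt_sq (by positivity)]
  rw [dist_eq, Complex.dist_eq, coe_smul_sub_self, hsqrt, norm_div]
  congr 2
  field_simp

lemma dist_smul_self_le_dist_smul_self {z w : ℍ} {k : ℝ}
    (hz : ‖fixedPointQuadratic g z‖ ≤ k * z.im) (hw : k * w.im ≤ ‖fixedPointQuadratic g w‖) :
    dist (g • z) z ≤ dist (g • w) w := by
  have hz' : ‖fixedPointQuadratic g z‖ / (2 * z.im) ≤ k / 2 := by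
    rw [div_le_div_iff₀ (by positivity) two_pos]; linarith
  have hw' : k / 2 ≤ ‖fixedPointQuadratic g w‖ / (2 * w.im) := by
    rw [div_le_div_iff₀ two_pos (by positivity)]; linarith
  rw [dist_smul_self, dist_smul_self]
  gcongr 2 * ?_
  exact Real.arsinh_le_arsinh.2 (hz'.trans hw')

lemma dist_smul_self_le {z : ℍ} {k : ℝ} (hz : ‖fixedPointQuadratic g z‖ ≤ k * z.im) :
    dist (g • z) z ≤ k := by
  have hz' : ‖fixedPointQuadratic g z‖ / (2 * z.im) ≤ k / 2 := by
    rw [div_le_div_iff₀ (by positivity) two_pos]; linarith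
  rw [dist_smul_self]
  linarith [Real.arsinh_le_self (by positivity : 0 ≤ ‖fixedPointQuadratic g z‖ / (2 * z.im))]

lemma hasExpDecayToTranslationLength_smul_of_forall_le (z₀ : ℍ) (k : ℝ)
    (h₀ : ‖fixedPointQuadratic g z₀‖ ≤ k * z₀.im)
    (h : ∀ z : ℍ, k * z.im ≤ ‖fixedPointQuadratic g z‖) :
    HasExpDecayToTranslationLength (g • · : ℍ → ℍ) :=
  .of_forall_dist_le z₀ fun z => dist_smul_self_le_dist_smul_self g h₀ (h z)

lemma hasExpDecayToTranslationLength_smul_of_isometry {c : ℝ → ℍ} (hc : Isometry c) {B : ℝ}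
    (hB : 0 ≤ B) (h : ∀ t, 0 ≤ t → ‖fixedPointQuadratic g (c t)‖ ≤ B * Real.exp (-t) * (c t).im) :
    HasExpDecayToTranslationLength (g • · : ℍ → ℍ) :=
  .of_isometry hc hB fun t ht => dist_smul_self_le g (h t ht)

lemma fixedPointQuadratic_of_c_eq_zero (hc : g 1 0 = 0) (z : ℂ) :
    fixedPointQuadratic g z = (g 0 0 - g 1 1 : ℝ) * z + g 0 1 := by
  simp only [fixedPointQuadratic, hc, Complex.ofReal_zero, zero_mul, zero_add, Complex.ofReal_sub]
  ring

lemma fixedPointQuadratic_of_c_ne_zero (hc : g 1 0 ≠ 0) (z : ℂ) :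
    fixedPointQuadratic g z = -g 1 0 * ((z - ((g 0 0 - g 1 1) / (2 * g 1 0) : ℝ)) ^ 2
      - ((g : Matrix (Fin 2) (Fin 2) ℝ).discr / (4 * g 1 0 ^ 2) : ℝ)) := by
  have hdet : ((g 0 0 * g 1 1 - g 0 1 * g 1 0 : ℝ) : ℂ) = 1 := by
    rw [g.det_fin_two, Complex.ofReal_one]
  have hc' : (g 1 0 : ℂ) ≠ 0 := Complex.ofReal_ne_zero.2 hc
  rw [fixedPointQuadratic, g.discr_fin_two]
  push_cast at hdet ⊢
  field_simp
  linear_combination (-16 : ℂ) * hdet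

lemma hasExpDecayToTranslationLength_smul_of_c_eq_zero_of_a_eq_d (hc : g 1 0 = 0)
    (had : g 0 0 = g 1 1) : HasExpDecayToTranslationLength (g • · : ℍ → ℍ) := by
  refine hasExpDecayToTranslationLength_smul_of_isometry g (isometry_vertical_line 0)
    (abs_nonneg (g 0 1)) fun t _ => ?_
  rw [fixedPointQuadratic_of_c_eq_zero g hc, had, sub_self, Complex.ofReal_zero, zero_mul,
    zero_add, Complex.norm_real, Real.norm_eq_abs, mk_im, mul_assoc, ← Real.exp_add,
    neg_add_cancel, Real.exp_zero, mul_one]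

lemma hasExpDecayToTranslationLength_smul_of_c_eq_zero_of_a_ne_d (hc : g 1 0 = 0)
    (had : g 0 0 ≠ g 1 1) : HasExpDecayToTranslationLength (g • · : ℍ → ℍ) := by
  have hQ := fixedPointQuadratic_of_c_eq_zero g hc
  have hsub : g 0 0 - g 1 1 ≠ 0 := sub_ne_zero.2 had
  refine hasExpDecayToTranslationLength_smul_of_forall_le g
    (mk ⟨-g 0 1 / (g 0 0 - g 1 1), 1⟩ one_pos) |g 0 0 - g 1 1| ?_ fun z => ?_
  · have : fixedPointQuadratic g (mk ⟨-g 0 1 / (g 0 0 - g 1 1), 1⟩ one_pos)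
        = (g 0 0 - g 1 1 : ℝ) * Complex.I := by
      have hsub' : ((g 0 0 - g 1 1 : ℝ) : ℂ) ≠ 0 := Complex.ofReal_ne_zero.2 hsub
      rw [hQ, coe_mk, Complex.mk_eq_add_mul_I, Complex.ofReal_div, Complex.ofReal_neg,
        Complex.ofReal_one]
      field_simp
      ring
    rw [this, norm_mul, Complex.norm_real, Complex.norm_I, mk_im, Real.norm_eq_abs]
  · calc |g 0 0 - g 1 1| * z.im = |(fixedPointQuadratic g z).im| := by
          rw [hQ, Complex.add_im, Complex.ofReal_im, add_zero, Complex.im_ofReal_mul, coe_im,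
            abs_mul, abs_of_pos z.im_pos]
      _ ≤ ‖fixedPointQuadratic g z‖ := Complex.abs_im_le_norm _

lemma hasExpDecayToTranslationLength_smul_of_c_ne_zero_of_discr_neg (hc : g 1 0 ≠ 0)
    (hD : (g : Matrix (Fin 2) (Fin 2) ℝ).discr < 0) :
    HasExpDecayToTranslationLength (g • · : ℍ → ℍ) := by
  have hQ := fixedPointQuadratic_of_c_ne_zero g hc
  set x₀ : ℝ := (g 0 0 - g 1 1) / (2 * g 1 0)
  set r : ℝ := (g : Matrix (Fin 2) (Fin 2) ℝ).discr / (4 * g 1 0 ^ 2)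
  have hr : r < 0 := div_neg_of_neg_of_pos hD (by positivity)
  have hy₀ : 0 < √(-r) := Real.sqrt_pos.2 (neg_pos.2 hr)
  refine hasExpDecayToTranslationLength_smul_of_forall_le g (mk ⟨x₀, √(-r)⟩ hy₀) 0 ?_
    fun z => by simp
  have hfix : fixedPointQuadratic g (mk ⟨x₀, √(-r)⟩ hy₀) = 0 := by
    rw [hQ, coe_mk, Complex.mk_eq_add_mul_I, add_sub_cancel_left, mul_pow, Complex.I_sq,
      ← Complex.ofReal_pow, Real.sq_sqrt (neg_nonneg.2 hr.le)]
    push_cast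
    ring
  simp [hfix]

lemma hasExpDecayToTranslationLength_smul_of_c_ne_zero_of_discr_eq_zero (hc : g 1 0 ≠ 0)
    (hD : (g : Matrix (Fin 2) (Fin 2) ℝ).discr = 0) :
    HasExpDecayToTranslationLength (g • · : ℍ → ℍ) := by
  have hQ := fixedPointQuadratic_of_c_ne_zero g hc
  set x₀ : ℝ := (g 0 0 - g 1 1) / (2 * g 1 0)
  refine hasExpDecayToTranslationLength_smul_of_isometry g
    ((isometry_vertical_line x₀).comp isometry_neg) (abs_nonneg (g 1 0)) fun t _ => ?_
  have hQt : fixedPointQuadratic g (mk ⟨x₀, Real.exp (-t)⟩ (Real.exp_pos _))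
      = ((g 1 0 * Real.exp (-t) ^ 2 : ℝ) : ℂ) := by
    rw [hQ, coe_mk, Complex.mk_eq_add_mul_I, add_sub_cancel_left, hD, zero_div, mul_pow,
      Complex.I_sq]
    push_cast
    ring
  rw [Function.comp_apply, hQt, mk_im, Complex.norm_real, Real.norm_eq_abs, abs_mul,
    abs_of_pos (by positivity : 0 < Real.exp (-t) ^ 2)]
  exact le_of_eq (by ring)

lemma hasExpDecayToTranslationLength_smul_of_c_ne_zero_of_discr_pos (hc : g 1 0 ≠ 0)
    (hD : 0 < (g : Matrix (Fin 2) (Fin 2) ℝ).discr) :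
    HasExpDecayToTranslationLength (g • · : ℍ → ℍ) := by
  have hQ := fixedPointQuadratic_of_c_ne_zero g hc
  set x₀ : ℝ := (g 0 0 - g 1 1) / (2 * g 1 0)
  set r : ℝ := (g : Matrix (Fin 2) (Fin 2) ℝ).discr / (4 * g 1 0 ^ 2)
  have hr : 0 < r := div_pos hD (by positivity)
  have hR : 0 < √r := Real.sqrt_pos.2 hr
  have hRr : (r : ℂ) = (√r : ℂ) ^ 2 := by rw [← Complex.ofReal_pow, Real.sq_sqrt hr.le]
  refine hasExpDecayToTranslationLength_smul_of_forall_le g (mk ⟨x₀, √r⟩ hR)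
    (2 * |g 1 0| * √r) ?_ fun z => ?_
  · have hQ₀ : fixedPointQuadratic g (mk ⟨x₀, √r⟩ hR) = ((2 * g 1 0 * √r ^ 2 : ℝ) : ℂ) := by
      rw [hQ, coe_mk, Complex.mk_eq_add_mul_I, add_sub_cancel_left, hRr, mul_pow, Complex.I_sq]
      push_cast
      ring
    rw [hQ₀, mk_im, Complex.norm_real, Real.norm_eq_abs, abs_mul, abs_mul,
      abs_of_pos (by positivity : 0 < √r ^ 2), abs_two]
    exact le_of_eq (by ring)
  · calc 2 * |g 1 0| * √r * z.im = |g 1 0| * (2 * |√r * ((z : ℂ) - x₀).im|) := by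
          rw [Complex.sub_im, Complex.ofReal_im, sub_zero, coe_im, abs_mul, abs_of_pos hR,
            abs_of_pos z.im_pos]
          ring
      _ ≤ |g 1 0| * ‖((z : ℂ) - x₀) ^ 2 - (√r : ℂ) ^ 2‖ := by
          gcongr
          exact Complex.two_mul_abs_mul_im_le_norm_sq_sub_sq _ _
      _ = ‖fixedPointQuadratic g z‖ := by
          rw [hQ, hRr, norm_mul, norm_neg, Complex.norm_real, Real.norm_eq_abs]

end UpperHalfPlane

end

/-- **Exponential decay to the translation length on the hyperbolic plane.** For every
`g ∈ SL(2,ℝ)` acting on the upper half-plane `ℍ` by Möbius transformations, there exist a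
path `c : [0,∞) → ℍ`, either constant or a unit-speed geodesic ray for the hyperbolic
metric, and constants `a, b > 0`, such that
`dist (g • c(t)) (c(t)) ≤ Δ_g + b e^{-a t}` for all `t ≥ 0`, where
`Δ_g = ⨅ z, dist (g • z) z` is the translation length of `g`. -/
theorem sl2_exponential_decay_to_translation_length
    (g : Matrix.SpecialLinearGroup (Fin 2) ℝ) :
    ∃ c : ℝ → ℍ,
      ((∀ s t : ℝ, 0 ≤ s → 0 ≤ t → c s = c t) ∨
        (∀ s t : ℝ, 0 ≤ s → 0 ≤ t → dist (c s) (c t) = |s - t|)) ∧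
      ∃ a > (0 : ℝ), ∃ b > (0 : ℝ), ∀ t : ℝ, 0 ≤ t →
        dist (g • c t) (c t) ≤ (⨅ z : ℍ, dist (g • z) z) + b * Real.exp (-a * t) := by
  show HasExpDecayToTranslationLength (g • · : ℍ → ℍ)
  by_cases hc : g 1 0 = 0
  · by_cases had : g 0 0 = g 1 1
    · exact hasExpDecayToTranslationLength_smul_of_c_eq_zero_of_a_eq_d g hc had
    · exact hasExpDecayToTranslationLength_smul_of_c_eq_zero_of_a_ne_d g hc had
  · rcases lt_trichotomy (g : Matrix (Fin 2) (Fin 2) ℝ).discr 0 with hD | hD | hD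
    · exact hasExpDecayToTranslationLength_smul_of_c_ne_zero_of_discr_neg g hc hD
    · exact hasExpDecayToTranslationLength_smul_of_c_ne_zero_of_discr_eq_zero g hc hD
    · exact hasExpDecayToTranslationLength_smul_of_c_ne_zero_of_discr_pos g hc hD
end

section
/- Let g₁, g₂ ∈ SL(2,ℝ) be commuting elements, i.e. g₁g₂ = g₂g₁, acting on the hyperbolic upper half-plane ℍ. Then there exist a single path c : [0,∞) → ℍ which is either constant or satisfies dist(c(s), c(t)) = |s − t| for all s, t ≥ 0 (a unit-speed geodesic ray for the hyperbolic metric), and constants a, b > 0, such that for m = 1, 2 and all t ≥ 0, dist(g_m • c(t), c(t)) ≤ Δ_{g_m} + b e^{−a t}. That is, every pair of commuting elements of SL(2,ℝ) has exponential decay to their translation lengths along a common ray. -/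
/-!
For `g = !![a, b; c, d] ∈ SL(2, ℝ)` one has
`sinh (d(g • z, z) / 2) = |c z² + (d - a) z - b| / (2 Im z)`, and the coefficient vectors
`(c, d - a, -b)` of two commuting elements have zero cross product, so both lie on one line `ℝ q`.
Both displacement functions are thus monotone functions of the single function `f = quadRatio q`.
Completing the square, `f² = disc q / 4 + (P / (2 Im z))²` with `P` real, so `f` attains its
infimum as soon as the quadratic has a root in `ℍ` or `P` vanishes somewhere. Otherwise the
quadratic has a double real root or is a nonzero constant, and `f` decays like `e^{-t}` along the
vertical geodesic running into that root, or up to `∞`.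
-/

open Real Matrix
open scoped MatrixGroups

namespace UpperHalfPlane

noncomputable def quadRatio (q : Fin 3 → ℝ) (z : ℍ) : ℝ :=
  ‖(q 0 : ℂ) * (z : ℂ) ^ 2 + (q 1 : ℂ) * z + q 2‖ / (2 * z.im)

def fixedPointQuad (g : SL(2, ℝ)) : Fin 3 → ℝ := ![g 1 0, g 1 1 - g 0 0, -g 0 1]

lemma quadRatio_nonneg (q : Fin 3 → ℝ) (z : ℍ) : 0 ≤ quadRatio q z :=
  div_nonneg (norm_nonneg _) (mul_nonneg zero_le_two z.im_pos.le)

lemma quadRatio_smul (α : ℝ) (q : Fin 3 → ℝ) (z : ℍ) :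
    quadRatio (α • q) z = |α| * quadRatio q z := by
  simp only [quadRatio, Pi.smul_apply, smul_eq_mul, Complex.ofReal_mul]
  rw [← mul_div_assoc, ← Real.norm_eq_abs, ← Complex.norm_real, ← norm_mul]
  ring_nf

lemma quadRatio_sq (q : Fin 3 → ℝ) (z : ℍ) :
    quadRatio q z ^ 2 = (q 1 ^ 2 - 4 * q 0 * q 2) / 4 +
      ((q 0 * (z.re ^ 2 + z.im ^ 2) + q 1 * z.re + q 2) / (2 * z.im)) ^ 2 := by
  have hy := z.im_pos.ne'
  rw [quadRatio, div_pow, Complex.sq_norm, Complex.normSq_apply]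
  simp only [pow_two, Complex.add_re, Complex.add_im, Complex.mul_re, Complex.mul_im,
    Complex.ofReal_re, Complex.ofReal_im, coe_re, coe_im]
  field_simp
  ring

lemma quadRatio_le_of_eq_zero {q : Fin 3 → ℝ} {z₀ : ℍ}
    (h : q 0 * (z₀.re ^ 2 + z₀.im ^ 2) + q 1 * z₀.re + q 2 = 0) (z : ℍ) :
    quadRatio q z₀ ≤ quadRatio q z := by
  refine (pow_le_pow_iff_left₀ (quadRatio_nonneg q z₀) (quadRatio_nonneg q z) two_ne_zero).1 ?_
  rw [quadRatio_sq, quadRatio_sq, h, zero_div, zero_pow two_ne_zero, add_zero]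
  exact le_add_of_nonneg_right (sq_nonneg _)

lemma quadRatio_eq_abs_of_disc_eq_zero {q : Fin 3 → ℝ} (h : q 1 ^ 2 - 4 * q 0 * q 2 = 0)
    (z : ℍ) : quadRatio q z =
      |(q 0 * (z.re ^ 2 + z.im ^ 2) + q 1 * z.re + q 2) / (2 * z.im)| := by
  rw [← Real.sqrt_sq_eq_abs, ← add_zero (_ ^ 2), ← zero_div 4, ← h, add_comm, ← quadRatio_sq,
    Real.sqrt_sq (quadRatio_nonneg q z)]

noncomputable def verticalGeodesic (x : ℝ) (t : ℝ) : ℍ := mk ⟨x, exp t⟩ (exp_pos t)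

@[simp] lemma verticalGeodesic_re (x t : ℝ) : (verticalGeodesic x t).re = x := rfl

@[simp] lemma verticalGeodesic_im (x t : ℝ) : (verticalGeodesic x t).im = exp t := rfl

lemma isometry_verticalGeodesic (x : ℝ) : Isometry (verticalGeodesic x) :=
  isometry_vertical_line x

lemma quadRatio_isMin_or_decays_of_lead_eq_zero {q : Fin 3 → ℝ} (h₀ : q 0 = 0) :
    (∃ z₀, ∀ z, quadRatio q z₀ ≤ quadRatio q z) ∨
      ∃ c : ℝ → ℍ, Isometry c ∧ ∃ K > 0, ∀ t, quadRatio q (c t) = K * exp (-t) := by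
  by_cases h₁ : q 1 = 0
  · by_cases h₂ : q 2 = 0
    · exact .inl ⟨verticalGeodesic 0 0, quadRatio_le_of_eq_zero (by simp [h₀, h₁, h₂])⟩
    · refine .inr ⟨verticalGeodesic 0, isometry_verticalGeodesic 0, |q 2| / 2, by positivity,
        fun t => ?_⟩
      rw [quadRatio_eq_abs_of_disc_eq_zero (by simp [h₀, h₁])]
      simp only [h₀, h₁, zero_mul, zero_add, verticalGeodesic_im, abs_div, abs_mul, abs_two,
        abs_of_pos (exp_pos t), exp_neg]
      ring
  · refine .inl ⟨verticalGeodesic (-q 2 / q 1) 0, quadRatio_le_of_eq_zero ?_⟩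
    simp only [h₀, verticalGeodesic_re]
    field_simp
    ring

lemma quadRatio_isMin_or_decays_of_lead_ne_zero {q : Fin 3 → ℝ} (h₀ : q 0 ≠ 0) :
    (∃ z₀, ∀ z, quadRatio q z₀ ≤ quadRatio q z) ∨
      ∃ c : ℝ → ℍ, Isometry c ∧ ∃ K > 0, ∀ t, quadRatio q (c t) = K * exp (-t) := by
  set D := q 1 ^ 2 - 4 * q 0 * q 2
  set x := -q 1 / (2 * q 0)
  have hP (y : ℝ) : q 0 * (x ^ 2 + y ^ 2) + q 1 * x + q 2 = q 0 * y ^ 2 - D / (4 * q 0) := by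
    simp only [x, D]; field_simp; ring
  rcases lt_trichotomy D 0 with hneg | hzero | hpos
  · have hy : 0 < √(-D) / (2 * |q 0|) := div_pos (sqrt_pos.2 (neg_pos.2 hneg)) (by positivity)
    have hy2 : (√(-D) / (2 * |q 0|)) ^ 2 = -D / (4 * q 0 ^ 2) := by
      rw [div_pow, sq_sqrt (by linarith), mul_pow, sq_abs]; ring
    refine .inl ⟨mk ⟨x, _⟩ hy, fun z => ?_⟩
    -- the root `x + i √(-D) / (2 |q 0|)` of the quadratic
    have hzero : quadRatio q (mk ⟨x, _⟩ hy) ^ 2 = 0 := by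
      rw [quadRatio_sq, mk_re, mk_im, hP, div_pow (_ - _), mul_pow, hy2]
      field_simp
      ring
    rw [pow_eq_zero_iff two_ne_zero |>.1 hzero]
    exact quadRatio_nonneg q z
  · refine .inr ⟨verticalGeodesic x ∘ Neg.neg, (isometry_verticalGeodesic x).comp isometry_neg,
      |q 0| / 2, by positivity, fun t => ?_⟩
    rw [quadRatio_eq_abs_of_disc_eq_zero hzero, Function.comp_apply, verticalGeodesic_re,
      verticalGeodesic_im, hP, hzero, zero_div, sub_zero, abs_div, abs_mul, abs_mul, abs_two,
      abs_of_pos (exp_pos _), abs_of_pos (pow_pos (exp_pos _) 2)]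
    field_simp
  · have hy : 0 < √D / (2 * |q 0|) := div_pos (sqrt_pos.2 hpos) (by positivity)
    refine .inl ⟨mk ⟨x, _⟩ hy, quadRatio_le_of_eq_zero ?_⟩
    rw [mk_re, mk_im, hP, div_pow, sq_sqrt hpos.le, mul_pow, sq_abs]
    field_simp
    ring

theorem quadRatio_isMin_or_decays (q : Fin 3 → ℝ) :
    (∃ z₀, ∀ z, quadRatio q z₀ ≤ quadRatio q z) ∨
      ∃ c : ℝ → ℍ, Isometry c ∧ ∃ K > 0, ∀ t, quadRatio q (c t) = K * exp (-t) := by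
  by_cases h₀ : q 0 = 0
  exacts [quadRatio_isMin_or_decays_of_lead_eq_zero h₀,
    quadRatio_isMin_or_decays_of_lead_ne_zero h₀]

lemma sinh_half_dist_smul_self (g : SL(2, ℝ)) (z : ℍ) :
    sinh (dist (g • z) z / 2) = quadRatio (fixedPointQuad g) z := by
  set w : ℂ := (g 1 0 : ℂ) * z + g 1 1
  have hw : w ≠ 0 := by
    have h := denom_ne_zero (SpecialLinearGroup.mapGL ℝ g) z
    unfold denom at h; simpa using h
  have hsub : ((g • z : ℍ) : ℂ) - z = -((fixedPointQuad g 0 : ℂ) * (z : ℂ) ^ 2 +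
      (fixedPointQuad g 1 : ℂ) * z + fixedPointQuad g 2) / w := by
    have hcoe : ((g • z : ℍ) : ℂ) = ((g 0 0 : ℂ) * z + g 0 1) / w := by
      simp [coe_specialLinearGroup_apply, w]
    rw [hcoe, eq_div_iff hw, sub_mul, div_mul_cancel₀ _ hw]
    simp only [fixedPointQuad, cons_val_zero, cons_val_one, cons_val, Complex.ofReal_sub,
      Complex.ofReal_neg, w]
    ring
  have him : (g • z).im = z.im / ‖w‖ ^ 2 := by
    rw [MulAction.compHom_smul_def, im_smul_eq_div_normSq, Complex.sq_norm]
    simp [denom, w]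
  have hy := z.im_pos
  have hw' : 0 < ‖w‖ := norm_pos_iff.2 hw
  rw [sinh_half_dist, him, Complex.dist_eq, hsub, norm_div, norm_neg,
    show z.im / ‖w‖ ^ 2 * z.im = (z.im / ‖w‖) ^ 2 by ring, sqrt_sq (by positivity), quadRatio]
  field_simp

lemma dist_smul_self_eq {g : SL(2, ℝ)} {q : Fin 3 → ℝ} {α : ℝ} (hg : fixedPointQuad g = α • q)
    (z : ℍ) : dist (g • z) z = 2 * arsinh (|α| * quadRatio q z) := by
  rw [← quadRatio_smul, ← hg, ← sinh_half_dist_smul_self, arsinh_sinh]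
  ring

lemma dist_smul_self_le_iInf {g : SL(2, ℝ)} {q : Fin 3 → ℝ} {α : ℝ}
    (hg : fixedPointQuad g = α • q) {z₀ : ℍ} (hz₀ : ∀ z, quadRatio q z₀ ≤ quadRatio q z) :
    dist (g • z₀) z₀ ≤ ⨅ z : ℍ, dist (g • z) z :=
  le_ciInf fun z => by
    rw [dist_smul_self_eq hg, dist_smul_self_eq hg]
    gcongr
    exact hz₀ z

lemma dist_smul_self_le_iInf_add {g : SL(2, ℝ)} {q : Fin 3 → ℝ} {α : ℝ}
    (hg : fixedPointQuad g = α • q) (z : ℍ) :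
    dist (g • z) z ≤ (⨅ w : ℍ, dist (g • w) w) + 2 * |α| * quadRatio q z := by
  have hΔ : 0 ≤ ⨅ w : ℍ, dist (g • w) w := Real.iInf_nonneg fun _ => dist_nonneg
  have harsinh : arsinh (|α| * quadRatio q z) ≤ |α| * quadRatio q z := by
    have hu : 0 ≤ |α| * quadRatio q z := mul_nonneg (abs_nonneg α) (quadRatio_nonneg q z)
    simpa only [arsinh_sinh] using arsinh_le_arsinh.2 (self_le_sinh_iff.2 hu)
  rw [dist_smul_self_eq hg]
  linarith

lemma cross_fixedPointQuad_eq_zero {g₁ g₂ : SL(2, ℝ)} (h : g₁ * g₂ = g₂ * g₁) :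
    fixedPointQuad g₁ ⨯₃ fixedPointQuad g₂ = 0 := by
  have e (i j : Fin 2) : (g₁ * g₂ : SL(2, ℝ)) i j = (g₂ * g₁ : SL(2, ℝ)) i j := by rw [h]
  have e00 := e 0 0
  have e01 := e 0 1
  have e10 := e 1 0
  simp only [Matrix.SpecialLinearGroup.coe_mul, Matrix.mul_apply, Fin.sum_univ_two] at e00 e01 e10
  ext i
  fin_cases i <;> simp only [fixedPointQuad, cross_apply, cons_val_zero, cons_val_one, cons_val,
    Pi.zero_apply, Fin.zero_eta, Fin.mk_one, Fin.reduceFinMk]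
  · linear_combination e01
  · linear_combination -e00
  · linear_combination -e10

lemma eq_smul_of_cross_eq_zero {u v : Fin 3 → ℝ} (hu : u ≠ 0) (h : u ⨯₃ v = 0) :
    v = (u ⬝ᵥ v / u ⬝ᵥ u) • u := by
  have huu : u ⬝ᵥ u ≠ 0 := dotProduct_self_eq_zero.not.2 hu
  have := cross_cross_eq_smul_sub_smul' u u v
  rw [h, map_zero, eq_comm, sub_eq_zero] at this
  rw [div_eq_inv_mul, mul_smul, this, inv_smul_smul₀ huu]

lemma exists_fixedPointQuad_eq_smul_of_commute {g₁ g₂ : SL(2, ℝ)} (h : g₁ * g₂ = g₂ * g₁) :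
    ∃ (q : Fin 3 → ℝ) (α₁ α₂ : ℝ), fixedPointQuad g₁ = α₁ • q ∧ fixedPointQuad g₂ = α₂ • q := by
  by_cases h₁ : fixedPointQuad g₁ = 0
  · exact ⟨fixedPointQuad g₂, 0, 1, by rw [h₁, zero_smul], (one_smul ℝ _).symm⟩
  · exact ⟨fixedPointQuad g₁, 1, _, (one_smul ℝ _).symm,
      eq_smul_of_cross_eq_zero h₁ (cross_fixedPointQuad_eq_zero h)⟩

end UpperHalfPlane

open UpperHalfPlane

/-- **Exponential decay of a commuting pair of isometries of the hyperbolic plane.** For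
commuting `g₁, g₂ ∈ SL(2,ℝ)` acting on the upper half-plane `ℍ` by Möbius
transformations, there exist a single path `c : [0,∞) → ℍ`, either constant or a
unit-speed geodesic ray for the hyperbolic metric, and constants `a, b > 0`, such that
for `m = 1, 2` and all `t ≥ 0`, `dist (g_m • c(t)) (c(t)) ≤ Δ_{g_m} + b e^{-a t}`,
where `Δ_g = ⨅ z, dist (g • z) z` is the translation length. -/
theorem sl2_exponential_decay_commuting_pair
    (g₁ g₂ : Matrix.SpecialLinearGroup (Fin 2) ℝ) (hcomm : g₁ * g₂ = g₂ * g₁) :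
    ∃ c : ℝ → ℍ,
      ((∀ s t : ℝ, 0 ≤ s → 0 ≤ t → c s = c t) ∨
        (∀ s t : ℝ, 0 ≤ s → 0 ≤ t → dist (c s) (c t) = |s - t|)) ∧
      ∃ a > (0 : ℝ), ∃ b > (0 : ℝ), ∀ t : ℝ, 0 ≤ t →
        dist (g₁ • c t) (c t) ≤ (⨅ z : ℍ, dist (g₁ • z) z) + b * Real.exp (-a * t) ∧
        dist (g₂ • c t) (c t) ≤ (⨅ z : ℍ, dist (g₂ • z) z) + b * Real.exp (-a * t) := by
  obtain ⟨q, α₁, α₂, h₁, h₂⟩ := exists_fixedPointQuad_eq_smul_of_commute hcomm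
  rcases quadRatio_isMin_or_decays q with ⟨z₀, hz₀⟩ | ⟨c, hc, K, hK, hdecay⟩
  · refine ⟨fun _ => z₀, .inl fun _ _ _ _ => rfl, 1, one_pos, 1, one_pos, fun t _ => ?_⟩
    have hpos : 0 < 1 * exp (-1 * t) := by positivity
    exact ⟨by linarith [dist_smul_self_le_iInf h₁ hz₀],
      by linarith [dist_smul_self_le_iInf h₂ hz₀]⟩
  · refine ⟨c, .inr fun s t _ _ => by rw [hc.dist_eq, Real.dist_eq], 1, one_pos,
      2 * K * (|α₁| + |α₂| + 1), by positivity, fun t _ => ?_⟩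
    have hbound (α : ℝ) (hα : |α| ≤ |α₁| + |α₂| + 1) :
        2 * |α| * quadRatio q (c t) ≤ 2 * K * (|α₁| + |α₂| + 1) * exp (-1 * t) := by
      rw [hdecay, neg_one_mul]
      nlinarith [mul_le_mul_of_nonneg_left hα (mul_pos hK (exp_pos (-t))).le]
    constructor
    · linarith [dist_smul_self_le_iInf_add h₁ (c t), hbound α₁ (by linarith [abs_nonneg α₂])]
    · linarith [dist_smul_self_le_iInf_add h₂ (c t), hbound α₂ (by linarith [abs_nonneg α₁])]
end

section
/- Let c ≥ 0, C ≥ 0, and let F : (0, 1/4] × (0, 2π) → ℝ be a nonnegative measurable function such that (i) for every r ∈ (0, 1/4], ∫₀^{2π} F(r, θ) dθ ≥ c, and (ii) the function r ↦ (1/r)·∫₀^{2π} (F(r, θ) − c/(2π)) dθ is integrable on (0, 1/4) with ∫₀^{1/4} (1/r)·∫₀^{2π} (F(r, θ) − c/(2π)) dθ dr ≤ C. Then ∫₀^{1/4} (1/(r·(log r²)²))·∫₀^{2π} F(r, θ) dθ dr ≤ c·log 2 + C. -/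
/-!
Write `G(r) = ∫₀^{2π} F(r, θ) dθ` and `w(r) = 1 / (r (log r²)²)`. Since `G ≥ c`, the inner integral
in the hypothesis is `G - c ≥ 0`, so `w G = c w + (log r²)⁻² · (G - c) / r`. On `(0, 1/4]` we have
`(log r²)² ≥ 1`, hence the second term is at most `(G - c) / r`, whose integral is at most `C`.
The weight has the explicit primitive `-(4 log r)⁻¹`, which tends to `0` at `0`, so
`∫₀^{1/4} w = 1 / (8 log 2) ≤ log 2`.
-/

open Real Set Filter Topology MeasureTheory

/-- If `f` is not integrable both sides vanish: then `m ≤ 0`, so `m = 0`. -/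
lemma intervalIntegral.integral_sub_div_of_le {f : ℝ → ℝ} {a b m : ℝ} (hm : 0 ≤ m)
    (hmf : m ≤ ∫ x in a..b, f x) :
    ∫ x in a..b, (f x - m / (b - a)) = (∫ x in a..b, f x) - m := by
  by_cases hf : IntervalIntegrable f volume a b
  · rw [intervalIntegral.integral_sub hf intervalIntegrable_const, intervalIntegral.integral_const,
      smul_eq_mul]
    rcases eq_or_ne b a with rfl | hab
    · simp only [intervalIntegral.integral_same] at hmf ⊢
      linarith
    · rw [mul_div_cancel₀ m (sub_ne_zero.mpr hab)]
  · have hfm : ¬ IntervalIntegrable (fun x => f x - m / (b - a)) volume a b := fun h =>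
      hf (by simpa using h.add (intervalIntegrable_const (c := m / (b - a))))
    rw [intervalIntegral.integral_undef hfm, intervalIntegral.integral_undef hf] at *
    linarith

lemma log_one_div_four : log (1 / 4 : ℝ) = -(2 * log 2) := by
  rw [one_div, log_inv, show (4 : ℝ) = 2 ^ 2 by norm_num, log_pow]; push_cast; ring

lemma inv_sq_log_sq_le_one {r : ℝ} (hr : 0 < r) (hr4 : r ≤ 1 / 4) :
    (log (r ^ 2) ^ 2)⁻¹ ≤ 1 := by
  have hlog : log r ≤ -(2 * log 2) := log_one_div_four ▸ log_le_log hr hr4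
  refine inv_le_one_of_one_le₀ ?_
  rw [log_pow, Nat.cast_ofNat]
  nlinarith [log_two_gt_d9]

lemma MeasureTheory.IntegrableOn.inv_sq_log_sq_mul {h : ℝ → ℝ} (hh : IntegrableOn h (Ioo 0 (1 / 4))) :
    IntegrableOn (fun r => (log (r ^ 2) ^ 2)⁻¹ * h r) (Ioo 0 (1 / 4)) := by
  refine hh.bdd_mul (c := 1)
    ((measurable_log.comp (measurable_id.pow_const 2)).pow_const 2).inv.aestronglyMeasurable ?_
  filter_upwards [ae_restrict_mem measurableSet_Ioo] with r hr
  rw [Real.norm_of_nonneg (by positivity)]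
  exact inv_sq_log_sq_le_one hr.1 hr.2.le

lemma hasDerivAt_neg_inv_four_log {r : ℝ} (hr : 0 < r) (hr1 : r ≠ 1) :
    HasDerivAt (fun x => -(4 * log x)⁻¹) (1 / (r * log (r ^ 2) ^ 2)) r := by
  have hlog : log r ≠ 0 := log_ne_zero_of_pos_of_ne_one hr hr1
  refine (((hasDerivAt_log hr.ne').const_mul 4).inv (by positivity)).neg.congr_deriv ?_
  rw [log_pow, Nat.cast_ofNat]
  field_simp
  ring

/-- The junk value `log 0 = 0` makes the primitive `-(4 log x)⁻¹` vanish at `0`, which is its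
limit there. -/
lemma continuousOn_neg_inv_four_log {a : ℝ} (ha : a < 1) :
    ContinuousOn (fun x => -(4 * log x)⁻¹) (Icc 0 a) := by
  intro x hx
  apply ContinuousAt.continuousWithinAt
  rcases hx.1.eq_or_lt with rfl | hx0
  · rw [← continuousWithinAt_compl_self, ContinuousWithinAt]
    simpa using (tendsto_inv_atBot_zero.comp
      (tendsto_log_nhdsNE_zero.const_mul_atBot (by norm_num : (0 : ℝ) < 4))).neg
  · have hlog : log x ≠ 0 := log_ne_zero_of_pos_of_ne_one hx0 (by linarith [hx.2])
    exact ((continuousAt_log hx0.ne').const_mul 4 |>.inv₀ (by positivity)).neg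

lemma integrableOn_one_div_mul_sq_log_sq {a : ℝ} (ha1 : a < 1) :
    IntegrableOn (fun r => 1 / (r * log (r ^ 2) ^ 2)) (Ioc 0 a) :=
  intervalIntegral.integrableOn_deriv_of_nonneg (continuousOn_neg_inv_four_log ha1)
    (fun r hr => hasDerivAt_neg_inv_four_log hr.1 (by linarith [hr.2]))
    (fun r hr => by have := hr.1; positivity)

lemma integral_one_div_mul_sq_log_sq {a : ℝ} (ha : 0 ≤ a) (ha1 : a < 1) :
    ∫ r in Ioc 0 a, 1 / (r * log (r ^ 2) ^ 2) = -(4 * log a)⁻¹ := by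
  rw [← intervalIntegral.integral_of_le ha,
    intervalIntegral.integral_eq_sub_of_hasDerivAt_of_le ha (continuousOn_neg_inv_four_log ha1)
      (fun r hr => hasDerivAt_neg_inv_four_log hr.1 (by linarith [hr.2]))
      ((intervalIntegrable_iff_integrableOn_Ioc_of_le ha).mpr
        (integrableOn_one_div_mul_sq_log_sq ha1))]
  simp

lemma integral_Ioo_quarter_one_div_mul_sq_log_sq_le :
    ∫ r in Ioo 0 (1 / 4), 1 / (r * log (r ^ 2) ^ 2) ≤ log 2 := by
  rw [← integral_Ioc_eq_integral_Ioo, integral_one_div_mul_sq_log_sq (by norm_num) (by norm_num),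
    log_one_div_four, show -(4 * -(2 * log 2))⁻¹ = (8 * log 2)⁻¹ by ring]
  have h2 := log_two_gt_d9
  rw [inv_le_iff_one_le_mul₀ (by positivity)]
  nlinarith

theorem poincare_weighted_energy_bound_general (c C : ℝ) (hc : 0 ≤ c)
    (F : ℝ → ℝ → ℝ)
    (hlower : ∀ r ∈ Set.Ioc (0 : ℝ) (1 / 4), c ≤ ∫ θ in (0 : ℝ)..(2 * Real.pi), F r θ)
    (hint : IntegrableOn
      (fun r => (1 / r) * ∫ θ in (0 : ℝ)..(2 * Real.pi), (F r θ - c / (2 * Real.pi)))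
      (Set.Ioo (0 : ℝ) (1 / 4)))
    (hbound : ∫ r in Set.Ioo (0 : ℝ) (1 / 4),
        (1 / r) * ∫ θ in (0 : ℝ)..(2 * Real.pi), (F r θ - c / (2 * Real.pi)) ≤ C) :
    ∫ r in Set.Ioo (0 : ℝ) (1 / 4),
        (1 / (r * (Real.log (r ^ 2)) ^ 2)) * ∫ θ in (0 : ℝ)..(2 * Real.pi), F r θ
      ≤ c * Real.log 2 + C := by
  set h := fun r => (1 / r) * ∫ θ in (0 : ℝ)..(2 * π), (F r θ - c / (2 * π)) with h_def
  have hexcess (r : ℝ) (hr : r ∈ Ioo (0 : ℝ) (1 / 4)) :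
      h r = (1 / r) * ((∫ θ in (0 : ℝ)..(2 * π), F r θ) - c) := by
    have := intervalIntegral.integral_sub_div_of_le hc (hlower r (Ioo_subset_Ioc_self hr))
    rw [sub_zero] at this
    simp only [h_def, this]
  have hsplit : ∀ r ∈ Ioo (0 : ℝ) (1 / 4),
      1 / (r * log (r ^ 2) ^ 2) * ∫ θ in (0 : ℝ)..(2 * π), F r θ
        = c * (1 / (r * log (r ^ 2) ^ 2)) + (log (r ^ 2) ^ 2)⁻¹ * h r := fun r hr => by
    rw [hexcess r hr]; ring
  have hφh_le : ∀ r ∈ Ioo (0 : ℝ) (1 / 4), (log (r ^ 2) ^ 2)⁻¹ * h r ≤ h r := fun r hr => by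
    refine mul_le_of_le_one_left ?_ (inv_sq_log_sq_le_one hr.1 hr.2.le)
    rw [hexcess r hr]
    exact mul_nonneg (one_div_pos.mpr hr.1).le
      (sub_nonneg.mpr (hlower r (Ioo_subset_Ioc_self hr)))
  have hφh := hint.inv_sq_log_sq_mul
  have hw : IntegrableOn (fun r => 1 / (r * log (r ^ 2) ^ 2)) (Ioo 0 (1 / 4)) :=
    (integrableOn_one_div_mul_sq_log_sq (by norm_num)).mono_set Ioo_subset_Ioc_self
  calc ∫ r in Ioo 0 (1 / 4), 1 / (r * log (r ^ 2) ^ 2) * ∫ θ in (0 : ℝ)..(2 * π), F r θ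
      = ∫ r in Ioo 0 (1 / 4), (c * (1 / (r * log (r ^ 2) ^ 2)) + (log (r ^ 2) ^ 2)⁻¹ * h r) :=
        setIntegral_congr_fun measurableSet_Ioo hsplit
    _ = c * (∫ r in Ioo 0 (1 / 4), 1 / (r * log (r ^ 2) ^ 2))
          + ∫ r in Ioo 0 (1 / 4), (log (r ^ 2) ^ 2)⁻¹ * h r := by
        rw [integral_add (hw.const_mul c) hφh, integral_const_mul]
    _ ≤ c * log 2 + C :=
        add_le_add (mul_le_mul_of_nonneg_left integral_Ioo_quarter_one_div_mul_sq_log_sq_le hc)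
          ((setIntegral_mono_on hφh hint measurableSet_Ioo hφh_le).trans hbound)

/-- **Energy bound with the Poincaré-type weight.** Let `F ≥ 0` be measurable on
`(0, 1/4] × (0, 2π)` with `∫₀^{2π} F(r,θ) dθ ≥ c` for each `r`, and suppose
`∫₀^{1/4} (1/r) ∫₀^{2π} (F(r,θ) - c/(2π)) dθ dr ≤ C` (the inner function of `r` being
integrable). Then `∫₀^{1/4} (1/(r (log r²)²)) ∫₀^{2π} F(r,θ) dθ dr ≤ c log 2 + C`. -/
theorem poincare_weighted_energy_bound (c C : ℝ) (hc : 0 ≤ c) (hC : 0 ≤ C)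
    (F : ℝ → ℝ → ℝ) (hmeas : Measurable (Function.uncurry F))
    (hnonneg : ∀ r ∈ Set.Ioc (0 : ℝ) (1 / 4), ∀ θ ∈ Set.Ioo (0 : ℝ) (2 * Real.pi),
      0 ≤ F r θ)
    (hlower : ∀ r ∈ Set.Ioc (0 : ℝ) (1 / 4), c ≤ ∫ θ in (0 : ℝ)..(2 * Real.pi), F r θ)
    (hint : IntegrableOn
      (fun r => (1 / r) * ∫ θ in (0 : ℝ)..(2 * Real.pi), (F r θ - c / (2 * Real.pi)))
      (Set.Ioo (0 : ℝ) (1 / 4)))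
    (hbound : ∫ r in Set.Ioo (0 : ℝ) (1 / 4),
        (1 / r) * ∫ θ in (0 : ℝ)..(2 * Real.pi), (F r θ - c / (2 * Real.pi)) ≤ C) :
    ∫ r in Set.Ioo (0 : ℝ) (1 / 4),
        (1 / (r * (Real.log (r ^ 2)) ^ 2)) * ∫ θ in (0 : ℝ)..(2 * Real.pi), F r θ
      ≤ c * Real.log 2 + C :=
  poincare_weighted_energy_bound_general c C hc F hlower hint hbound
end

section
/- Let h : ℝ² → ℝ be twice continuously differentiable on (0, ∞) × ℝ, nonnegative, 2π-periodic in the second variable (h(t, ψ + 2π) = h(t, ψ)), subharmonic in the sense that (∂²h/∂t²) + (∂²h/∂ψ²) ≥ 0 on (0, ∞) × ℝ, and integrable: ∫_{(0,∞)×(0,2π)} h(t, ψ) dt dψ < ∞. Then for every t₀ ≥ 2 and every ψ₀ ∈ ℝ one has t₀ · h(t₀, ψ₀) ≤ (8/π) · ∫_{((t₀−1)/2, ∞) × (0, 2π)} h(t, ψ) dt dψ. In particular, sup_{ψ ∈ ℝ} t · h(t, ψ) → 0 as t → ∞. -/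
/-!
Write `u (t, ψ) = h t ψ` and `F t = ∫₀^{2π} u (t, ψ) dψ`. The sub-mean value property of the
subharmonic function `u` on the unit disk around `(t₀, ψ₀)` gives `π u (t₀, ψ₀) ≤ ∫_disk u`, and
the disk lies in the rectangle `(t₀ - 1, t₀ + 1) × (ψ₀ - π, ψ₀ + π)`, over which `u` integrates,
by periodicity, to `∫_{t₀-1}^{t₀+1} F`. Periodicity also kills `∫ ∂²u/∂ψ²`, so
`F'' = ∫ ∂²u/∂t² ≥ 0`: `F` is convex, and being nonnegative and integrable on `(0, ∞)` it is
nonincreasing. Hence `π u (t₀, ψ₀) ≤ 2 F (t₀ - 1) ≤ 4 / (t₀ - 1) · ∫_{(t₀-1)/2}^∞ F`, and the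
tail integral tends to `0`.

The sub-mean value property is proved in polar coordinates `c + s (cos θ, sin θ)`: integrated
over a circle, the polar form `s² Δu = s ∂_s (s ∂_s u) + ∂_θ² u` of the Laplacian shows that the
circle integrals `M s` satisfy `(s M')' ≥ 0`, hence `M' ≥ 0` and `M s ≥ 2π u c`; integrating in
`s` gives the disk.
-/

open MeasureTheory Set Real Function Filter Topology

theorem intervalIntegral_sub_eq_integral_integral_of_hasDerivAt {g g' : ℝ → ℝ → ℝ}
    {a b c d : ℝ} (hab : a ≤ b) (hcd : c ≤ d)
    (hg : ContinuousOn (uncurry g) (Icc a b ×ˢ Icc c d))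
    (hg' : ContinuousOn (uncurry g') (Icc a b ×ˢ Icc c d))
    (hderiv : ∀ x ∈ Ioo a b, ∀ y ∈ Icc c d, HasDerivAt (g · y) (g' x y) x) :
    (∫ y in c..d, g b y) - ∫ y in c..d, g a y = ∫ x in a..b, ∫ y in c..d, g' x y := by
  have hslice : ∀ x ∈ Icc a b, IntervalIntegrable (g x) volume c d := fun x hx =>
    (hg.comp (Continuous.prodMk_right x).continuousOn fun y hy => ⟨hx, hy⟩)
      |>.intervalIntegrable_of_Icc hcd
  rw [← intervalIntegral.integral_sub (hslice b (right_mem_Icc.2 hab))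
    (hslice a (left_mem_Icc.2 hab)), intervalIntegral_intervalIntegral_swap]
  · refine intervalIntegral.integral_congr fun y hy => ?_
    rw [uIcc_of_le hcd] at hy
    have hline : MapsTo (·, y) (Icc a b) (Icc a b ×ˢ Icc c d) := fun x hx => ⟨hx, hy⟩
    exact (intervalIntegral.integral_eq_sub_of_hasDerivAt_of_le hab
      (hg.comp (Continuous.prodMk_left y).continuousOn hline) (fun x hx => hderiv x hx y hy)
      ((hg'.comp (Continuous.prodMk_left y).continuousOn hline).intervalIntegrable_of_Icc
        hab)).symm
  · rw [uIoc_of_le hab, uIoc_of_le hcd]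
    exact (hg'.integrableOn_compact (isCompact_Icc.prod isCompact_Icc)).mono_set
      (prod_mono Ioc_subset_Icc_self Ioc_subset_Icc_self)

theorem ContinuousOn.continuousOn_intervalIntegral {f : ℝ → ℝ → ℝ} {a b : ℝ} (hab : a ≤ b)
    (hf : ContinuousOn (uncurry f) (Icc a b ×ˢ univ)) (c d : ℝ) :
    ContinuousOn (fun x => ∫ y in c..d, f x y) (Icc a b) := by
  have hext : Continuous (uncurry fun x y => f (projIcc a b hab x) y) :=
    hf.comp_continuous (f := fun q : ℝ × ℝ => ((projIcc a b hab q.1 : ℝ), q.2))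
      ((continuous_subtype_val.comp (continuous_projIcc.comp continuous_fst)).prodMk
        continuous_snd) fun q => ⟨Subtype.prop _, trivial⟩
  refine (intervalIntegral.continuous_parametric_intervalIntegral_of_continuous' (μ := volume)
    hext c d).continuousOn.congr fun x hx => ?_
  simp [projIcc_of_mem hab hx]

theorem antitoneOn_Ioi_of_integrableOn_of_monotoneOn_slope {F W : ℝ → ℝ} {a : ℝ}
    (hFW : ∀ x ∈ Ioi a, ∀ y, x ≤ y → F y - F x = ∫ t in x..y, W t)
    (hW : MonotoneOn W (Ioi a)) (hF : ∀ x ∈ Ioi a, 0 ≤ F x) (hFi : IntegrableOn F (Ioi a)) :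
    AntitoneOn F (Ioi a) := by
  have hWi : ∀ x ∈ Ioi a, ∀ y, x ≤ y → IntervalIntegrable W volume x y := fun x hx y hxy =>
    (hW.mono fun t ht => lt_of_lt_of_le hx (uIcc_of_le hxy ▸ ht).1).intervalIntegrable
  -- A positive slope `W s` would give `F ≥ W s` on `(s + 1, ∞)`, against integrability.
  have hW0 : ∀ s ∈ Ioi a, W s ≤ 0 := by
    intro s hs
    by_contra! hpos
    have hlow : ∀ t ∈ Ioi (s + 1), ‖W s‖ ≤ F t := fun t ht => by
      have hst : s ≤ t := by linarith [mem_Ioi.1 ht]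
      have hmono := intervalIntegral.integral_mono_on hst intervalIntegrable_const
        (hWi s hs t hst) fun σ hσ => hW hs (lt_of_lt_of_le hs hσ.1) hσ.1
      rw [intervalIntegral.integral_const, smul_eq_mul, ← hFW s hs t hst] at hmono
      rw [Real.norm_eq_abs, abs_of_pos hpos]
      nlinarith [hF s hs, mem_Ioi.1 ht]
    have hconst : IntegrableOn (fun _ => W s) (Ioi (s + 1)) :=
      (hFi.mono_set (Ioi_subset_Ioi (by linarith [mem_Ioi.1 hs]))).mono' aestronglyMeasurable_const
        ((ae_restrict_iff' measurableSet_Ioi).2 (Eventually.of_forall hlow))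
    simp [integrableOn_const_iff, hpos.ne'] at hconst
  intro x hx y _ hxy
  have hmono := intervalIntegral.integral_mono_on hxy (hWi x hx y hxy) intervalIntegrable_const
    fun t ht => hW0 t (lt_of_lt_of_le hx ht.1)
  rw [intervalIntegral.integral_const, smul_zero, ← hFW x hx y hxy] at hmono
  linarith

theorem setIntegral_Ioo_le_mul_of_antitoneOn {F : ℝ → ℝ} {x y : ℝ} (hxy : x ≤ y)
    (hF : AntitoneOn F (Icc x y)) (hFi : IntegrableOn F (Ioo x y)) :
    ∫ t in Ioo x y, F t ≤ (y - x) * F x := by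
  have hmono := setIntegral_mono_on hFi (integrableOn_const (by simp)) measurableSet_Ioo
    fun t ht => hF (left_mem_Icc.2 hxy) (Ioo_subset_Icc_self ht) ht.1.le
  rwa [setIntegral_const, measureReal_def, Real.volume_Ioo, ENNReal.toReal_ofReal (by linarith),
    smul_eq_mul] at hmono

theorem mul_le_setIntegral_Ioi_of_antitoneOn {F : ℝ → ℝ} {a x : ℝ} (hax : a ≤ x)
    (hF : AntitoneOn F (Ioi a)) (hF0 : ∀ t ∈ Ioi a, 0 ≤ F t) (hFi : IntegrableOn F (Ioi a)) :
    (x - a) * F x ≤ ∫ t in Ioi a, F t := by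
  have hmono : ∫ _ in Ioc a x, F x ≤ ∫ t in Ioc a x, F t :=
    setIntegral_mono_on (integrableOn_const (by simp)) (hFi.mono_set Ioc_subset_Ioi_self)
      measurableSet_Ioc fun t ht => hF ht.1 (lt_of_lt_of_le ht.1 ht.2) ht.2
  rw [setIntegral_const, measureReal_def, Real.volume_Ioc, ENNReal.toReal_ofReal (by linarith),
    smul_eq_mul] at hmono
  exact hmono.trans (setIntegral_mono_set hFi
    ((ae_restrict_iff' measurableSet_Ioi).2 (Eventually.of_forall hF0))
    Ioc_subset_Ioi_self.eventuallyLE)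

theorem tendsto_setIntegral_Ioi_prod_atTop {f : ℝ × ℝ → ℝ} {a : ℝ} {B : Set ℝ}
    (hB : MeasurableSet B) (hf : IntegrableOn f (Ioi a ×ˢ B)) :
    Tendsto (fun x => ∫ p in Ioi x ×ˢ B, f p) atTop (𝓝 0) := by
  have h := tendsto_setIntegral_of_antitone (μ := volume) (s := fun x : ℝ => Ioi x ×ˢ B)
    (fun _ => measurableSet_Ioi.prod hB)
    (fun _ _ hxy => prod_mono (Ioi_subset_Ioi hxy) subset_rfl) ⟨a, hf⟩
  have hempty : ⋂ x : ℝ, Ioi x ×ˢ B = ∅ :=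
    eq_empty_of_forall_notMem fun p hp => lt_irrefl p.1 (mem_iInter.1 hp p.1).1
  rwa [hempty, Measure.restrict_empty, integral_zero_measure] at h

theorem Function.Periodic.setIntegral_Ioo_eq_intervalIntegral {f : ℝ → ℝ} {T : ℝ}
    (hf : Periodic f T) (hT : 0 ≤ T) (b : ℝ) :
    ∫ x in Ioo b (b + T), f x = ∫ x in 0..T, f x := by
  rw [← integral_Ioc_eq_integral_Ioo, ← intervalIntegral.integral_of_le (by linarith),
    hf.intervalIntegral_add_eq b 0, zero_add]

theorem ContinuousLinearMap.apply_prodMk {E : Type*} [AddCommGroup E] [Module ℝ E]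
    [TopologicalSpace E] (L : ℝ × ℝ →L[ℝ] E) (a b : ℝ) :
    L (a, b) = a • L (1, 0) + b • L (0, 1) := by
  rw [← map_smul, ← map_smul, ← map_add]
  simp

theorem ContinuousLinearMap.apply_prodMk_prodMk (Q : ℝ × ℝ →L[ℝ] ℝ × ℝ →L[ℝ] ℝ)
    (a b x y : ℝ) :
    Q (a, b) (x, y) = a * x * Q (1, 0) (1, 0) + a * y * Q (1, 0) (0, 1)
      + b * x * Q (0, 1) (1, 0) + b * y * Q (0, 1) (0, 1) := by
  rw [Q.apply_prodMk a b]
  simp only [FunLike.coe_add, FunLike.coe_smul, Pi.add_apply, Pi.smul_apply,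
    (Q (1, 0)).apply_prodMk x y, (Q (0, 1)).apply_prodMk x y, smul_eq_mul]
  ring

noncomputable def planeLaplacian (u : ℝ × ℝ → ℝ) (p : ℝ × ℝ) : ℝ :=
  fderiv ℝ (fderiv ℝ u) p (1, 0) (1, 0) + fderiv ℝ (fderiv ℝ u) p (0, 1) (0, 1)

section PlaneCalculus

variable {u : ℝ × ℝ → ℝ} {U : Set (ℝ × ℝ)}

theorem ContDiffOn.hasFDerivAt_of_isOpen (hU : IsOpen U) (hu : ContDiffOn ℝ 2 u U)
    {p : ℝ × ℝ} (hp : p ∈ U) : HasFDerivAt u (fderiv ℝ u p) p :=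
  ((hu.contDiffAt (hU.mem_nhds hp)).differentiableAt (by norm_num)).hasFDerivAt

theorem ContDiffOn.hasFDerivAt_fderiv_of_isOpen (hU : IsOpen U) (hu : ContDiffOn ℝ 2 u U)
    {p : ℝ × ℝ} (hp : p ∈ U) : HasFDerivAt (fderiv ℝ u) (fderiv ℝ (fderiv ℝ u) p) p :=
  (((hu.fderiv_of_isOpen hU (m := 1) le_rfl).contDiffAt (hU.mem_nhds hp)).differentiableAt
    one_ne_zero).hasFDerivAt

theorem ContDiffOn.continuousOn_fderiv_fderiv_of_isOpen (hU : IsOpen U)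
    (hu : ContDiffOn ℝ 2 u U) : ContinuousOn (fderiv ℝ (fderiv ℝ u)) U :=
  (hu.fderiv_of_isOpen hU (m := 1) le_rfl).continuousOn_fderiv_of_isOpen hU le_rfl

theorem ContDiffOn.hasDerivAt_fderiv_comp_apply (hU : IsOpen U) (hu : ContDiffOn ℝ 2 u U)
    {γ w : ℝ → ℝ × ℝ} {v w' : ℝ × ℝ} {t : ℝ} (hγ : HasDerivAt γ v t)
    (hw : HasDerivAt w w' t) (ht : γ t ∈ U) :
    HasDerivAt (fun s => fderiv ℝ u (γ s) (w s))
      (fderiv ℝ (fderiv ℝ u) (γ t) v (w t) + fderiv ℝ u (γ t) w') t :=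
  ((hu.hasFDerivAt_fderiv_of_isOpen hU ht).comp_hasDerivAt t hγ).clm_apply hw

theorem ContDiffOn.iteratedDeriv_two_comp (hU : IsOpen U) (hu : ContDiffOn ℝ 2 u U)
    {γ : ℝ → ℝ × ℝ} {v : ℝ × ℝ} (hγ : ∀ t, HasDerivAt γ v t) {t : ℝ} (ht : γ t ∈ U) :
    iteratedDeriv 2 (fun s => u (γ s)) t = fderiv ℝ (fderiv ℝ u) (γ t) v v := by
  have hγc : Continuous γ := continuous_iff_continuousAt.2 fun s => (hγ s).continuousAt
  have hderiv : deriv (fun s => u (γ s)) =ᶠ[𝓝 t] fun s => fderiv ℝ u (γ s) v := by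
    filter_upwards [hγc.continuousAt.preimage_mem_nhds (hU.mem_nhds ht)] with s hs
    exact ((hu.hasFDerivAt_of_isOpen hU hs).comp_hasDerivAt s (hγ s)).deriv
  rw [iteratedDeriv_succ, iteratedDeriv_one, hderiv.deriv_eq]
  simpa using (hu.hasDerivAt_fderiv_comp_apply hU (hγ t) (hasDerivAt_const t v) ht).deriv

theorem ContDiffOn.planeLaplacian_eq (hU : IsOpen U) (hu : ContDiffOn ℝ 2 u U)
    {p : ℝ × ℝ} (hp : p ∈ U) :
    planeLaplacian u p = iteratedDeriv 2 (fun t => u (t, p.2)) p.1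
      + iteratedDeriv 2 (fun ψ => u (p.1, ψ)) p.2 := by
  rw [hu.iteratedDeriv_two_comp hU
      (fun t => (hasDerivAt_id' t).prodMk (hasDerivAt_const t p.2)) hp,
    hu.iteratedDeriv_two_comp hU
      (fun ψ => (hasDerivAt_const ψ p.1).prodMk (hasDerivAt_id' ψ)) hp]
  rfl

end PlaneCalculus

noncomputable def polarPoint (c : ℝ × ℝ) (s θ : ℝ) : ℝ × ℝ :=
  (c.1 + s * cos θ, c.2 + s * sin θ)

theorem continuous_polarPoint (c : ℝ × ℝ) : Continuous (uncurry (polarPoint c)) := by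
  unfold polarPoint uncurry
  fun_prop

theorem add_polarCoord_symm (c : ℝ × ℝ) (s θ : ℝ) :
    c + polarCoord.symm (s, θ) = polarPoint c s θ :=
  rfl

theorem hasDerivAt_polarPoint_radius (c : ℝ × ℝ) (s θ : ℝ) :
    HasDerivAt (polarPoint c · θ) (cos θ, sin θ) s := by
  refine HasDerivAt.prodMk ?_ ?_
  · simpa using ((hasDerivAt_id' s).mul_const (cos θ)).const_add c.1
  · simpa using ((hasDerivAt_id' s).mul_const (sin θ)).const_add c.2

theorem hasDerivAt_polarPoint_angle (c : ℝ × ℝ) (s θ : ℝ) :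
    HasDerivAt (polarPoint c s ·) (-(s * sin θ), s * cos θ) θ := by
  refine HasDerivAt.prodMk ?_ ?_
  · simpa using ((hasDerivAt_cos θ).const_mul s).const_add c.1
  · simpa using ((hasDerivAt_sin θ).const_mul s).const_add c.2

/-- With `L = Du` and `Q = D²u` at `polarPoint c s θ`, the left-hand side is
`s ∂_s (s ∂_s u) + ∂_θ² u`, by the derivatives of `polarPoint` in `s` and in `θ`. -/
theorem polar_laplacian_identity (Q : ℝ × ℝ →L[ℝ] ℝ × ℝ →L[ℝ] ℝ) (L : ℝ × ℝ →L[ℝ] ℝ)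
    (s θ : ℝ) :
    s * (L (cos θ, sin θ) + s * Q (cos θ, sin θ) (cos θ, sin θ))
      + (Q (-(s * sin θ), s * cos θ) (-(s * sin θ), s * cos θ)
        + L (-(s * cos θ), -(s * sin θ)))
      = s ^ 2 * (Q (1, 0) (1, 0) + Q (0, 1) (0, 1)) := by
  rw [Q.apply_prodMk_prodMk (cos θ), Q.apply_prodMk_prodMk (-(s * sin θ)),
    L.apply_prodMk (cos θ), L.apply_prodMk (-(s * cos θ)), smul_eq_mul, smul_eq_mul,
    smul_eq_mul, smul_eq_mul]
  linear_combination s ^ 2 * (Q (1, 0) (1, 0) + Q (0, 1) (0, 1)) * sin_sq_add_cos_sq θ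

section SubMeanValue

variable {u : ℝ × ℝ → ℝ} {U : Set (ℝ × ℝ)} {c : ℝ × ℝ} {r : ℝ}

theorem polarPoint_mem_of_mapsTo (hK : MapsTo (uncurry (polarPoint c)) (Icc 0 r ×ˢ univ) U)
    {s : ℝ} (hs : s ∈ Icc 0 r) (θ : ℝ) : polarPoint c s θ ∈ U :=
  hK (x := (s, θ)) ⟨hs, trivial⟩

theorem ContinuousOn.comp_polarPoint {E : Type*} [TopologicalSpace E] {φ : ℝ × ℝ → E}
    (hφ : ContinuousOn φ U) (hK : MapsTo (uncurry (polarPoint c)) (Icc 0 r ×ˢ univ) U) :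
    ContinuousOn (fun q : ℝ × ℝ => φ (polarPoint c q.1 q.2)) (Icc 0 r ×ˢ univ) :=
  hφ.comp (continuous_polarPoint c).continuousOn hK

theorem ContinuousOn.continuous_comp_polarPoint {E : Type*} [TopologicalSpace E]
    {φ : ℝ × ℝ → E} (hφ : ContinuousOn φ U)
    (hK : MapsTo (uncurry (polarPoint c)) (Icc 0 r ×ˢ univ) U) {s : ℝ} (hs : s ∈ Icc 0 r) :
    Continuous fun θ => φ (polarPoint c s θ) :=
  (hφ.comp_polarPoint hK).comp_continuous (Continuous.prodMk_right s) fun _ => ⟨hs, trivial⟩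

/- The disk is written out: `Metric.ball c r` in `ℝ × ℝ` is a square, for the sup metric. -/
theorem setIntegral_disk_eq_integral_polarPoint (hu : ContinuousOn u U)
    (hK : MapsTo (uncurry (polarPoint c)) (Icc 0 r ×ˢ univ) U) (hr : 0 ≤ r) :
    ∫ p in {p : ℝ × ℝ | (p.1 - c.1) ^ 2 + (p.2 - c.2) ^ 2 < r ^ 2}, u p
      = ∫ s in Ioo 0 r, s * ∫ θ in 0..2 * π, u (polarPoint c s θ) := by
  set D := {p : ℝ × ℝ | (p.1 - c.1) ^ 2 + (p.2 - c.2) ^ 2 < r ^ 2}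
  have hD : MeasurableSet D := (isOpen_lt (by fun_prop) continuous_const).measurableSet
  have hpolar : EqOn (fun p : ℝ × ℝ => p.1 • D.indicator u (c + polarCoord.symm p))
      ((Iio r ×ˢ univ).indicator fun q => q.1 * u (polarPoint c q.1 q.2))
      polarCoord.target := by
    rintro ⟨s, θ⟩ ⟨hs, -⟩
    have hmem : polarPoint c s θ ∈ D ↔ (s, θ) ∈ Iio r ×ˢ univ := by
      simp only [D, polarPoint, mem_ofPred_eq, mem_prod, mem_Iio, mem_univ, and_true,
        add_sub_cancel_left, mul_pow, ← mul_add, cos_sq_add_sin_sq, mul_one]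
      exact pow_lt_pow_iff_left₀ (le_of_lt hs) hr two_ne_zero
    dsimp only
    rw [add_polarCoord_symm]
    by_cases h : (s, θ) ∈ Iio r ×ˢ univ
    · rw [indicator_of_mem h, indicator_of_mem (hmem.2 h), smul_eq_mul]
    · rw [indicator_of_notMem h, indicator_of_notMem (mt hmem.1 h), smul_zero]
  have htarget : polarCoord.target ∩ Iio r ×ˢ univ = Ioo 0 r ×ˢ Ioo (-π) (-π + 2 * π) := by
    rw [show -π + 2 * π = π by ring]
    ext ⟨s, θ⟩
    simp [polarCoord_target, and_comm, and_assoc, and_left_comm]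
  have hint : IntegrableOn (fun q : ℝ × ℝ => q.1 * u (polarPoint c q.1 q.2))
      (Ioo 0 r ×ˢ Ioo (-π) (-π + 2 * π)) :=
    ((continuousOn_fst.mul (hu.comp_polarPoint hK)).mono (prod_mono subset_rfl (subset_univ _))
      |>.integrableOn_compact (isCompact_Icc.prod isCompact_Icc)).mono_set
      (prod_mono Ioo_subset_Icc_self Ioo_subset_Icc_self)
  calc ∫ p in D, u p = ∫ p, D.indicator u (c + p) := by
        rw [integral_add_left_eq_self, integral_indicator hD]
    _ = ∫ p in polarCoord.target, p.1 • D.indicator u (c + polarCoord.symm p) :=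
        (integral_comp_polarCoord_symm _).symm
    _ = ∫ q in Ioo 0 r ×ˢ Ioo (-π) (-π + 2 * π), q.1 * u (polarPoint c q.1 q.2) := by
        rw [setIntegral_congr_fun polarCoord.open_target.measurableSet hpolar,
          setIntegral_indicator (measurableSet_Iio.prod MeasurableSet.univ), htarget]
    _ = ∫ s in Ioo 0 r, ∫ θ in Ioo (-π) (-π + 2 * π), s * u (polarPoint c s θ) :=
        setIntegral_prod _ hint
    _ = ∫ s in Ioo 0 r, s * ∫ θ in 0..2 * π, u (polarPoint c s θ) := by
        refine setIntegral_congr_fun measurableSet_Ioo fun s _ => ?_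
        have hper : Periodic (fun θ => u (polarPoint c s θ)) (2 * π) := fun θ => by
          simp [polarPoint]
        rw [integral_const_mul, hper.setIntegral_Ioo_eq_intervalIntegral two_pi_pos.le]

variable (hU : IsOpen U) (hu : ContDiffOn ℝ 2 u U)
  (hK : MapsTo (uncurry (polarPoint c)) (Icc 0 r ×ˢ univ) U)
include hU hu hK

theorem integral_angular_deriv_polarPoint_eq_zero (hr : 0 ≤ r) :
    ∫ θ in 0..2 * π, (fderiv ℝ (fderiv ℝ u) (polarPoint c r θ) (-(r * sin θ), r * cos θ)
        (-(r * sin θ), r * cos θ) + fderiv ℝ u (polarPoint c r θ) (-(r * cos θ), -(r * sin θ)))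
      = 0 := by
  have hr' : r ∈ Icc 0 r := right_mem_Icc.2 hr
  have hD1 := (hu.continuousOn_fderiv_of_isOpen hU one_le_two).continuous_comp_polarPoint hK hr'
  have hD2 := (hu.continuousOn_fderiv_fderiv_of_isOpen hU).continuous_comp_polarPoint hK hr'
  have hw : ∀ θ, HasDerivAt (fun θ => (-(r * sin θ), r * cos θ))
      (-(r * cos θ), -(r * sin θ)) θ := fun θ =>
    ((hasDerivAt_sin θ).const_mul r).neg.prodMk (by simpa using (hasDerivAt_cos θ).const_mul r)
  rw [intervalIntegral.integral_eq_sub_of_hasDerivAt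
    (fun θ _ => hu.hasDerivAt_fderiv_comp_apply hU (hasDerivAt_polarPoint_angle c r θ) (hw θ)
      (polarPoint_mem_of_mapsTo hK hr' θ))
    (by apply Continuous.intervalIntegrable; fun_prop)]
  simp [polarPoint]

theorem integral_deriv_radius_mul_radial_deriv_nonneg
    (hΔ : ∀ p ∈ U, 0 ≤ planeLaplacian u p) (hr : 0 < r) :
    0 ≤ ∫ θ in 0..2 * π, (fderiv ℝ u (polarPoint c r θ) (cos θ, sin θ)
      + r * fderiv ℝ (fderiv ℝ u) (polarPoint c r θ) (cos θ, sin θ) (cos θ, sin θ)) := by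
  have hr' : r ∈ Icc 0 r := right_mem_Icc.2 hr.le
  have hD1 := (hu.continuousOn_fderiv_of_isOpen hU one_le_two).continuous_comp_polarPoint hK hr'
  have hD2 := (hu.continuousOn_fderiv_fderiv_of_isOpen hU).continuous_comp_polarPoint hK hr'
  have h := intervalIntegral.integral_nonneg (μ := volume) two_pi_pos.le fun θ _ =>
    mul_nonneg (sq_nonneg r) (hΔ _ (polarPoint_mem_of_mapsTo hK hr' θ))
  unfold planeLaplacian at h
  rw [intervalIntegral.integral_congr fun θ _ => (polar_laplacian_identity
      (fderiv ℝ (fderiv ℝ u) (polarPoint c r θ)) (fderiv ℝ u (polarPoint c r θ)) r θ).symm,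
    intervalIntegral.integral_add (by apply Continuous.intervalIntegrable; fun_prop)
      (by apply Continuous.intervalIntegrable; fun_prop),
    integral_angular_deriv_polarPoint_eq_zero hU hu hK hr.le, add_zero,
    intervalIntegral.integral_const_mul] at h
  exact nonneg_of_mul_nonneg_right h hr

theorem integral_radial_deriv_polarPoint_nonneg (hΔ : ∀ p ∈ U, 0 ≤ planeLaplacian u p)
    (hr : 0 < r) : 0 ≤ ∫ θ in 0..2 * π, fderiv ℝ u (polarPoint c r θ) (cos θ, sin θ) := by
  have hD1 := (hu.continuousOn_fderiv_of_isOpen hU one_le_two).comp_polarPoint hK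
  have hD2 := (hu.continuousOn_fderiv_fderiv_of_isOpen hU).comp_polarPoint hK
  have hrect : Icc 0 r ×ˢ Icc 0 (2 * π) ⊆ Icc 0 r ×ˢ univ :=
    prod_mono subset_rfl (subset_univ _)
  have hFTC := intervalIntegral_sub_eq_integral_integral_of_hasDerivAt
    (g := fun s θ => s * fderiv ℝ u (polarPoint c s θ) (cos θ, sin θ))
    (g' := fun s θ => fderiv ℝ u (polarPoint c s θ) (cos θ, sin θ)
      + s * fderiv ℝ (fderiv ℝ u) (polarPoint c s θ) (cos θ, sin θ) (cos θ, sin θ))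
    hr.le two_pi_pos.le
    ((continuousOn_fst.mul (hD1.clm_apply (by fun_prop))).mono hrect)
    (((hD1.clm_apply (by fun_prop)).add
      (continuousOn_fst.mul ((hD2.clm_apply (by fun_prop)).clm_apply (by fun_prop)))).mono hrect)
    fun s hs θ _ => ((hasDerivAt_id' s).mul (hu.hasDerivAt_fderiv_comp_apply hU
        (hasDerivAt_polarPoint_radius c s θ) (hasDerivAt_const s (cos θ, sin θ))
        (polarPoint_mem_of_mapsTo hK (Ioo_subset_Icc_self hs) θ))).congr_deriv (by simp)
  simp only [zero_mul, intervalIntegral.integral_zero, sub_zero,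
    intervalIntegral.integral_const_mul] at hFTC
  refine nonneg_of_mul_nonneg_right ?_ hr
  rw [hFTC, intervalIntegral.integral_of_le hr.le]
  exact setIntegral_nonneg measurableSet_Ioc fun s hs =>
    integral_deriv_radius_mul_radial_deriv_nonneg hU hu
      (hK.mono_left (prod_mono (Icc_subset_Icc_right hs.2) subset_rfl)) hΔ hs.1

theorem two_pi_mul_le_integral_polarPoint (hΔ : ∀ p ∈ U, 0 ≤ planeLaplacian u p)
    (hr : 0 ≤ r) : 2 * π * u c ≤ ∫ θ in 0..2 * π, u (polarPoint c r θ) := by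
  have hD1 := (hu.continuousOn_fderiv_of_isOpen hU one_le_two).comp_polarPoint hK
  have hrect : Icc 0 r ×ˢ Icc 0 (2 * π) ⊆ Icc 0 r ×ˢ univ :=
    prod_mono subset_rfl (subset_univ _)
  have hFTC := intervalIntegral_sub_eq_integral_integral_of_hasDerivAt
    (g := fun s θ => u (polarPoint c s θ))
    (g' := fun s θ => fderiv ℝ u (polarPoint c s θ) (cos θ, sin θ)) hr two_pi_pos.le
    ((hu.continuousOn.comp_polarPoint hK).mono hrect)
    ((hD1.clm_apply (by fun_prop)).mono hrect)
    fun s hs θ _ => (hu.hasFDerivAt_of_isOpen hU (polarPoint_mem_of_mapsTo hK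
      (Ioo_subset_Icc_self hs) θ)).comp_hasDerivAt s (hasDerivAt_polarPoint_radius c s θ)
  have hcenter : ∀ θ, polarPoint c 0 θ = c := fun θ => by simp [polarPoint]
  simp only [hcenter, intervalIntegral.integral_const, smul_eq_mul, sub_zero] at hFTC
  rw [intervalIntegral.integral_of_le hr] at hFTC
  have := setIntegral_nonneg (μ := volume) measurableSet_Ioc fun s hs =>
    integral_radial_deriv_polarPoint_nonneg hU hu
      (hK.mono_left (prod_mono (Icc_subset_Icc_right hs.2) subset_rfl)) hΔ hs.1
  linarith

theorem pi_mul_sq_mul_le_setIntegral_disk (hΔ : ∀ p ∈ U, 0 ≤ planeLaplacian u p)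
    (hr : 0 ≤ r) :
    π * r ^ 2 * u c
      ≤ ∫ p in {p : ℝ × ℝ | (p.1 - c.1) ^ 2 + (p.2 - c.2) ^ 2 < r ^ 2}, u p := by
  rw [setIntegral_disk_eq_integral_polarPoint hu.continuousOn hK hr]
  have hmean : ContinuousOn (fun s => ∫ θ in 0..2 * π, u (polarPoint c s θ)) (Icc 0 r) :=
    (hu.continuousOn.comp_polarPoint hK).continuousOn_intervalIntegral
      (f := fun s θ => u (polarPoint c s θ)) hr 0 (2 * π)
  calc π * r ^ 2 * u c = ∫ s in Ioo 0 r, s * (2 * π * u c) := by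
        rw [← integral_Ioc_eq_integral_Ioo, ← intervalIntegral.integral_of_le hr,
          intervalIntegral.integral_mul_const, integral_id]
        ring
    _ ≤ ∫ s in Ioo 0 r, s * ∫ θ in 0..2 * π, u (polarPoint c s θ) :=
        setIntegral_mono_on
          ((by fun_prop : Continuous fun s : ℝ => s * (2 * π * u c)).integrableOn_Icc.mono_set
            Ioo_subset_Icc_self)
          ((continuousOn_id.mul hmean).integrableOn_Icc.mono_set Ioo_subset_Icc_self)
          measurableSet_Ioo fun s hs => mul_le_mul_of_nonneg_left
            (two_pi_mul_le_integral_polarPoint hU hu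
              (hK.mono_left (prod_mono (Icc_subset_Icc_right hs.2.le) subset_rfl)) hΔ hs.1.le)
            hs.1.le

end SubMeanValue

noncomputable def sliceIntegral (u : ℝ × ℝ → ℝ) (t : ℝ) : ℝ := ∫ ψ in 0..2 * π, u (t, ψ)

section Slices

variable {u : ℝ × ℝ → ℝ}

theorem MeasureTheory.IntegrableOn.sliceIntegral {A : Set ℝ}
    (hu : IntegrableOn u (A ×ˢ Ioo 0 (2 * π))) : IntegrableOn (sliceIntegral u) A := by
  rw [IntegrableOn, Measure.volume_eq_prod, ← Measure.prod_restrict] at hu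
  refine hu.integral_prod_left.congr (ae_of_all _ fun t => ?_)
  rw [_root_.sliceIntegral, intervalIntegral.integral_of_le two_pi_pos.le,
    integral_Ioc_eq_integral_Ioo]

theorem setIntegral_prod_Ioo_eq_setIntegral_sliceIntegral
    (hper : ∀ t ∈ Ioi 0, ∀ ψ, u (t, ψ + 2 * π) = u (t, ψ)) {A : Set ℝ} (hA : MeasurableSet A)
    (hA0 : A ⊆ Ioi 0) (b : ℝ) (hu : IntegrableOn u (A ×ˢ Ioo b (b + 2 * π))) :
    ∫ p in A ×ˢ Ioo b (b + 2 * π), u p = ∫ t in A, sliceIntegral u t := by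
  rw [Measure.volume_eq_prod, setIntegral_prod _ hu]
  refine setIntegral_congr_fun hA fun t ht => ?_
  exact Periodic.setIntegral_Ioo_eq_intervalIntegral (f := fun ψ => u (t, ψ)) (hper t (hA0 ht))
    two_pi_pos.le b

theorem sliceIntegral_nonneg (hnn : ∀ p ∈ Ioi 0 ×ˢ univ, 0 ≤ u p) {t : ℝ} (ht : 0 < t) :
    0 ≤ sliceIntegral u t :=
  intervalIntegral.integral_nonneg two_pi_pos.le fun _ _ => hnn _ ⟨ht, trivial⟩

variable (hu : ContDiffOn ℝ 2 u (Ioi 0 ×ˢ univ))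
include hu

theorem sliceIntegral_sub {t₁ t₂ : ℝ} (h₁ : 0 < t₁) (h₁₂ : t₁ ≤ t₂) :
    sliceIntegral u t₂ - sliceIntegral u t₁
      = ∫ s in t₁..t₂, ∫ ψ in 0..2 * π, fderiv ℝ u (s, ψ) (1, 0) := by
  have hU : IsOpen (Ioi (0 : ℝ) ×ˢ (univ : Set ℝ)) := isOpen_Ioi.prod isOpen_univ
  have hrect : Icc t₁ t₂ ×ˢ Icc 0 (2 * π) ⊆ Ioi 0 ×ˢ univ :=
    prod_mono (fun s hs => lt_of_lt_of_le h₁ hs.1) (subset_univ _)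
  exact intervalIntegral_sub_eq_integral_integral_of_hasDerivAt (g := fun s ψ => u (s, ψ))
    (g' := fun s ψ => fderiv ℝ u (s, ψ) (1, 0)) h₁₂ two_pi_pos.le
    (hu.continuousOn.mono hrect)
    (((hu.continuousOn_fderiv_of_isOpen hU one_le_two).clm_apply continuousOn_const).mono hrect)
    fun s hs ψ _ => (hu.hasFDerivAt_of_isOpen hU ⟨lt_of_lt_of_le h₁ hs.1.le, trivial⟩)
      |>.comp_hasDerivAt s ((hasDerivAt_id' s).prodMk (hasDerivAt_const s ψ))

theorem integral_fderiv_fderiv_snd_eq_zero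
    (hper : ∀ t ∈ Ioi 0, ∀ ψ, u (t, ψ + 2 * π) = u (t, ψ)) {t : ℝ} (ht : 0 < t) :
    ∫ ψ in 0..2 * π, fderiv ℝ (fderiv ℝ u) (t, ψ) (0, 1) (0, 1) = 0 := by
  have hU : IsOpen (Ioi (0 : ℝ) ×ˢ (univ : Set ℝ)) := isOpen_Ioi.prod isOpen_univ
  have hmem : ∀ ψ : ℝ, (t, ψ) ∈ Ioi 0 ×ˢ univ := fun _ => ⟨ht, trivial⟩
  have hline : ∀ ψ : ℝ, HasDerivAt (fun ψ => (t, ψ)) ((0 : ℝ), (1 : ℝ)) ψ := fun ψ =>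
    (hasDerivAt_const ψ t).prodMk (hasDerivAt_id' ψ)
  have hslope : ∀ ψ, HasDerivAt (fun ψ => u (t, ψ)) (fderiv ℝ u (t, ψ) (0, 1)) ψ := fun ψ =>
    (hu.hasFDerivAt_of_isOpen hU (hmem ψ)).comp_hasDerivAt ψ (hline ψ)
  have hshift : HasDerivAt (fun ψ => u (t, ψ)) (fderiv ℝ u (t, 2 * π) (0, 1)) 0 := by
    rw [← funext (hper t ht)]
    have h := (hu.hasFDerivAt_of_isOpen hU (hmem (0 + 2 * π))).comp_hasDerivAt (0 : ℝ)
      ((hasDerivAt_const (0 : ℝ) t).prodMk ((hasDerivAt_id' (0 : ℝ)).add_const (2 * π)))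
    rwa [zero_add] at h
  have hD2 : Continuous fun ψ => fderiv ℝ (fderiv ℝ u) (t, ψ) :=
    (hu.continuousOn_fderiv_fderiv_of_isOpen hU).comp_continuous (by fun_prop) hmem
  rw [intervalIntegral.integral_eq_sub_of_hasDerivAt (fun ψ _ =>
      (hu.hasDerivAt_fderiv_comp_apply hU (hline ψ) (hasDerivAt_const ψ (0, 1)) (hmem ψ))
        |>.congr_deriv (by simp)) (by apply Continuous.intervalIntegrable; fun_prop)]
  simp [hshift.unique (hslope 0)]

theorem monotoneOn_integral_fderiv_fst
    (hper : ∀ t ∈ Ioi 0, ∀ ψ, u (t, ψ + 2 * π) = u (t, ψ))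
    (hΔ : ∀ p ∈ Ioi 0 ×ˢ univ, 0 ≤ planeLaplacian u p) :
    MonotoneOn (fun s => ∫ ψ in 0..2 * π, fderiv ℝ u (s, ψ) (1, 0)) (Ioi 0) := by
  have hU : IsOpen (Ioi (0 : ℝ) ×ˢ (univ : Set ℝ)) := isOpen_Ioi.prod isOpen_univ
  have hD1 := hu.continuousOn_fderiv_of_isOpen hU one_le_two
  have hD2 := hu.continuousOn_fderiv_fderiv_of_isOpen hU
  have hnonneg : ∀ s ∈ Ioi (0 : ℝ),
      0 ≤ ∫ ψ in 0..2 * π, fderiv ℝ (fderiv ℝ u) (s, ψ) (1, 0) (1, 0) := fun s hs => by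
    have hD2s : Continuous fun ψ => fderiv ℝ (fderiv ℝ u) (s, ψ) :=
      hD2.comp_continuous (by fun_prop) fun _ => ⟨hs, trivial⟩
    have h := intervalIntegral.integral_nonneg (μ := volume) two_pi_pos.le fun ψ _ =>
      hΔ (s, ψ) ⟨hs, trivial⟩
    unfold planeLaplacian at h
    rwa [intervalIntegral.integral_add (by apply Continuous.intervalIntegrable; fun_prop)
      (by apply Continuous.intervalIntegrable; fun_prop),
      integral_fderiv_fderiv_snd_eq_zero hu hper hs, add_zero] at h
  intro s₁ h₁ s₂ _ h₁₂
  have hrect : Icc s₁ s₂ ×ˢ Icc 0 (2 * π) ⊆ Ioi 0 ×ˢ univ :=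
    prod_mono (fun s hs => lt_of_lt_of_le h₁ hs.1) (subset_univ _)
  have hFTC := intervalIntegral_sub_eq_integral_integral_of_hasDerivAt
    (g := fun s ψ => fderiv ℝ u (s, ψ) (1, 0))
    (g' := fun s ψ => fderiv ℝ (fderiv ℝ u) (s, ψ) (1, 0) (1, 0)) h₁₂ two_pi_pos.le
    ((hD1.clm_apply continuousOn_const).mono hrect)
    (((hD2.clm_apply continuousOn_const).clm_apply continuousOn_const).mono hrect)
    fun s hs ψ _ => (hu.hasDerivAt_fderiv_comp_apply hU
      ((hasDerivAt_id' s).prodMk (hasDerivAt_const s ψ)) (hasDerivAt_const s (1, 0))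
      ⟨lt_of_lt_of_le h₁ hs.1.le, trivial⟩).congr_deriv (by simp)
  have := intervalIntegral.integral_nonneg (μ := volume) h₁₂ fun s hs =>
    hnonneg s (lt_of_lt_of_le h₁ hs.1)
  change _ ≤ _
  linarith

theorem antitoneOn_sliceIntegral (hnn : ∀ p ∈ Ioi 0 ×ˢ univ, 0 ≤ u p)
    (hper : ∀ t ∈ Ioi 0, ∀ ψ, u (t, ψ + 2 * π) = u (t, ψ))
    (hΔ : ∀ p ∈ Ioi 0 ×ˢ univ, 0 ≤ planeLaplacian u p)
    (hint : IntegrableOn (sliceIntegral u) (Ioi 0)) :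
    AntitoneOn (sliceIntegral u) (Ioi 0) :=
  antitoneOn_Ioi_of_integrableOn_of_monotoneOn_slope
    (fun _ hx _ hxy => sliceIntegral_sub hu hx hxy) (monotoneOn_integral_fderiv_fst hu hper hΔ)
    (fun _ => sliceIntegral_nonneg hnn) hint

theorem pi_mul_le_two_mul_sliceIntegral (hnn : ∀ p ∈ Ioi 0 ×ˢ univ, 0 ≤ u p)
    (hper : ∀ t ∈ Ioi 0, ∀ ψ, u (t, ψ + 2 * π) = u (t, ψ))
    (hΔ : ∀ p ∈ Ioi 0 ×ˢ univ, 0 ≤ planeLaplacian u p)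
    (hF : AntitoneOn (sliceIntegral u) (Ioi 0)) (hFi : IntegrableOn (sliceIntegral u) (Ioi 0))
    {t₀ : ℝ} (ht₀ : 2 ≤ t₀) (ψ₀ : ℝ) :
    π * u (t₀, ψ₀) ≤ 2 * sliceIntegral u (t₀ - 1) := by
  set R := Ioo (t₀ - 1) (t₀ + 1) ×ˢ Ioo (ψ₀ - π) (ψ₀ - π + 2 * π)
  have hK : MapsTo (uncurry (polarPoint (t₀, ψ₀))) (Icc 0 1 ×ˢ univ) (Ioi 0 ×ˢ univ) :=
    fun q hq => ⟨show 0 < t₀ + q.1 * cos q.2 by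
      nlinarith [mul_nonneg hq.1.1 (neg_le_iff_add_nonneg.1 (neg_one_le_cos q.2)), hq.1.2],
      trivial⟩
  have hR0 : Ioo (t₀ - 1) (t₀ + 1) ⊆ Ioi 0 := fun t ht => mem_Ioi.2 (by linarith [ht.1])
  have hRi : IntegrableOn u R :=
    ((hu.continuousOn.mono (prod_mono (fun t ht => mem_Ioi.2 (by linarith [ht.1]))
      (subset_univ _))).integrableOn_compact (isCompact_Icc.prod isCompact_Icc)).mono_set
      (prod_mono Ioo_subset_Icc_self Ioo_subset_Icc_self)
  have hdisk : {p : ℝ × ℝ | (p.1 - (t₀, ψ₀).1) ^ 2 + (p.2 - (t₀, ψ₀).2) ^ 2 < 1 ^ 2} ⊆ R :=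
    fun p hp => by
      have : (p.1 - t₀) ^ 2 + (p.2 - ψ₀) ^ 2 < 1 := by simpa using hp
      have := pi_gt_three
      refine ⟨⟨?_, ?_⟩, ?_, ?_⟩ <;> nlinarith [sq_nonneg (p.1 - t₀), sq_nonneg (p.2 - ψ₀)]
  calc π * u (t₀, ψ₀) = π * 1 ^ 2 * u (t₀, ψ₀) := by ring
    _ ≤ ∫ p in {p : ℝ × ℝ | (p.1 - (t₀, ψ₀).1) ^ 2 + (p.2 - (t₀, ψ₀).2) ^ 2 < 1 ^ 2}, u p :=
        pi_mul_sq_mul_le_setIntegral_disk (isOpen_Ioi.prod isOpen_univ) hu hK hΔ zero_le_one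
    _ ≤ ∫ p in R, u p :=
        setIntegral_mono_set hRi ((ae_restrict_iff' (measurableSet_Ioo.prod measurableSet_Ioo)).2
          (Eventually.of_forall fun p hp => hnn p ⟨hR0 hp.1, trivial⟩)) hdisk.eventuallyLE
    _ = ∫ t in Ioo (t₀ - 1) (t₀ + 1), sliceIntegral u t :=
        setIntegral_prod_Ioo_eq_setIntegral_sliceIntegral hper measurableSet_Ioo hR0 _ hRi
    _ ≤ (t₀ + 1 - (t₀ - 1)) * sliceIntegral u (t₀ - 1) :=
        setIntegral_Ioo_le_mul_of_antitoneOn (by linarith)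
          (hF.mono fun t ht => mem_Ioi.2 (by linarith [ht.1])) (hFi.mono_set hR0)
    _ = 2 * sliceIntegral u (t₀ - 1) := by ring

end Slices

theorem half_mul_sliceIntegral_le_setIntegral_tail {u : ℝ × ℝ → ℝ}
    (hnn : ∀ p ∈ Ioi 0 ×ˢ univ, 0 ≤ u p)
    (hper : ∀ t ∈ Ioi 0, ∀ ψ, u (t, ψ + 2 * π) = u (t, ψ))
    (hF : AntitoneOn (sliceIntegral u) (Ioi 0)) (hint : IntegrableOn u (Ioi 0 ×ˢ Ioo 0 (2 * π)))
    {x : ℝ} (hx : 0 < x) :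
    x / 2 * sliceIntegral u x ≤ ∫ p in Ioi (x / 2) ×ˢ Ioo 0 (2 * π), u p := by
  have hhalf : Ioi (x / 2) ⊆ Ioi 0 := Ioi_subset_Ioi (by linarith)
  have hfubini := setIntegral_prod_Ioo_eq_setIntegral_sliceIntegral hper measurableSet_Ioi hhalf 0
    (by rw [zero_add]; exact hint.mono_set (prod_mono hhalf subset_rfl))
  rw [zero_add] at hfubini
  rw [hfubini]
  convert mul_le_setIntegral_Ioi_of_antitoneOn (x := x) (by linarith) (hF.mono hhalf)
    (fun t ht => sliceIntegral_nonneg hnn (hhalf ht)) (hint.sliceIntegral.mono_set hhalf) using 2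
  ring

theorem mul_le_setIntegral_tail_of_planeLaplacian_nonneg {u : ℝ × ℝ → ℝ}
    (hu : ContDiffOn ℝ 2 u (Ioi 0 ×ˢ univ)) (hnn : ∀ p ∈ Ioi 0 ×ˢ univ, 0 ≤ u p)
    (hper : ∀ t ∈ Ioi 0, ∀ ψ, u (t, ψ + 2 * π) = u (t, ψ))
    (hΔ : ∀ p ∈ Ioi 0 ×ˢ univ, 0 ≤ planeLaplacian u p)
    (hint : IntegrableOn u (Ioi 0 ×ˢ Ioo 0 (2 * π))) {t₀ : ℝ} (ht₀ : 2 ≤ t₀) (ψ₀ : ℝ) :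
    t₀ * u (t₀, ψ₀) ≤ 8 / π * ∫ p in Ioi ((t₀ - 1) / 2) ×ˢ Ioo 0 (2 * π), u p := by
  have hF := antitoneOn_sliceIntegral hu hnn hper hΔ hint.sliceIntegral
  have hdisk := pi_mul_le_two_mul_sliceIntegral hu hnn hper hΔ hF hint.sliceIntegral ht₀ ψ₀
  have htail := half_mul_sliceIntegral_le_setIntegral_tail hnn hper hF hint
    (by linarith : 0 < t₀ - 1)
  have h0 : 0 ≤ u (t₀, ψ₀) := hnn _ ⟨mem_Ioi.2 (by linarith), trivial⟩
  rw [div_mul_eq_mul_div, le_div_iff₀ pi_pos]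
  nlinarith [mul_le_mul_of_nonneg_left hdisk (by linarith : (0 : ℝ) ≤ t₀ - 1),
    mul_nonneg (by linarith : (0 : ℝ) ≤ t₀ - 2) (mul_nonneg pi_pos.le h0)]

/-- **Pointwise decay of a subharmonic energy density on a half-cylinder.** Let `h` be a
nonnegative `C²` function on `(0, ∞) × ℝ`, `2π`-periodic in the second variable,
subharmonic (`∂²h/∂t² + ∂²h/∂ψ² ≥ 0`), and integrable over `(0, ∞) × (0, 2π)`. Then for
every `t₀ ≥ 2` and every `ψ₀`,
`t₀ h(t₀, ψ₀) ≤ (8/π) ∫_{((t₀-1)/2, ∞) × (0, 2π)} h`, and in particular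
`sup_ψ t h(t, ψ) → 0` as `t → ∞`. -/
theorem subharmonic_halfCylinder_decay (h : ℝ → ℝ → ℝ)
    (hsmooth : ContDiffOn ℝ 2 (fun p : ℝ × ℝ => h p.1 p.2)
      (Set.Ioi (0 : ℝ) ×ˢ (Set.univ : Set ℝ)))
    (hnonneg : ∀ t ∈ Set.Ioi (0 : ℝ), ∀ ψ : ℝ, 0 ≤ h t ψ)
    (hper : ∀ t ∈ Set.Ioi (0 : ℝ), ∀ ψ : ℝ, h t (ψ + 2 * Real.pi) = h t ψ)
    (hsubh : ∀ t ∈ Set.Ioi (0 : ℝ), ∀ ψ : ℝ,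
      0 ≤ iteratedDeriv 2 (fun t' => h t' ψ) t + iteratedDeriv 2 (fun ψ' => h t ψ') ψ)
    (hint : IntegrableOn (fun p : ℝ × ℝ => h p.1 p.2)
      (Set.Ioi (0 : ℝ) ×ˢ Set.Ioo (0 : ℝ) (2 * Real.pi))) :
    (∀ t₀ : ℝ, 2 ≤ t₀ → ∀ ψ₀ : ℝ,
      t₀ * h t₀ ψ₀ ≤ (8 / Real.pi) *
        ∫ p in (Set.Ioi ((t₀ - 1) / 2) ×ˢ Set.Ioo (0 : ℝ) (2 * Real.pi)), h p.1 p.2) ∧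
    Filter.Tendsto (fun t => ⨆ ψ : ℝ, t * h t ψ) Filter.atTop (nhds 0) := by
  have hΔ : ∀ p ∈ Ioi 0 ×ˢ univ, 0 ≤ planeLaplacian (fun p : ℝ × ℝ => h p.1 p.2) p :=
    fun p hp => (hsmooth.planeLaplacian_eq (isOpen_Ioi.prod isOpen_univ) hp).symm ▸
      hsubh p.1 hp.1 p.2
  have hbound : ∀ t₀ : ℝ, 2 ≤ t₀ → ∀ ψ₀ : ℝ, t₀ * h t₀ ψ₀
      ≤ 8 / π * ∫ p in Ioi ((t₀ - 1) / 2) ×ˢ Ioo 0 (2 * π), h p.1 p.2 := fun _ ht₀ ψ₀ =>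
    mul_le_setIntegral_tail_of_planeLaplacian_nonneg hsmooth (fun p hp => hnonneg p.1 hp.1 p.2)
      (fun t ht ψ => hper t ht ψ) hΔ hint ht₀ ψ₀
  refine ⟨hbound, ?_⟩
  have hshift : Tendsto (fun t : ℝ => (t - 1) / 2) atTop atTop :=
    tendsto_atTop_atTop.2 fun b => ⟨2 * b + 1, fun t ht => by linarith⟩
  have htail := ((tendsto_setIntegral_Ioi_prod_atTop measurableSet_Ioo hint).comp
    hshift).const_mul (8 / π)
  rw [mul_zero] at htail
  refine tendsto_of_tendsto_of_tendsto_of_le_of_le' tendsto_const_nhds htail ?_ ?_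
  · filter_upwards [eventually_ge_atTop 2] with t ht
    exact Real.iSup_nonneg fun ψ =>
      mul_nonneg (by linarith) (hnonneg t (mem_Ioi.2 (by linarith)) ψ)
  · filter_upwards [eventually_ge_atTop 2] with t ht
    exact ciSup_le (hbound t ht)
end
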